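/- arXiv:2006.08142 — 5 statements merged into one kernel-verified Lean document; each statement's English description precedes it below -/
import Mathlib

section
/- There are constants c, C > 0 depending only on n such that the following holds. Let n ≥ 3, let q be an odd prime power, and let A ⊆ M_n(𝔽_q) with |A| ≥ C · q^{n²−1}. Then |{a₁ + a₂a₃ : a₁, a₂, a₃ ∈ A}| ≥ c · q^{n²}. -/
/-!
Let `E` be the number of coincidences `a + bc = a' + b'c'` with all six matrices in `A`, so that
Cauchy–Schwarz gives `|A|⁶ ≤ |A + A·A| · E`. Expanding `E` in the additive characters
`x ↦ ψ (tr (m x))` of `M_n(𝔽_q)` gives `q^{n²} E = ∑ₘ |Â(m)|² |R(m)|²`, where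
`Â(m) = ∑_{a ∈ A} ψ (tr (m a))` and `R(m) = ∑_{b,c ∈ A} ψ (tr (m b c))`. The term `m = 0` is `|A|⁶`. For `m ≠ 0`, Cauchy–Schwarz in `b`
bounds `|R(m)|²` by `|A|² q^{n²}` times the number of `d` with `d m = 0`, which is at most
`q^{n(n-1)}`; together with Parseval for `A` the terms `m ≠ 0` contribute at most
`|A|³ q^{3n²-n} ≤ |A|⁶` once `|A| ≥ q^{n²-1}` and `n ≥ 3`. Hence `|A + A·A| ≥ q^{n²}/2`.
-/

open Finset Matrix ComplexConjugate

section Collisions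

variable {α β : Type*} [DecidableEq β]

def collisions (s : Finset α) (g : α → β) : ℕ := #{p ∈ s ×ˢ s | g p.1 = g p.2}

theorem collisions_id (s : Finset β) : collisions s id = #s := by
  rw [← s.diag_card, collisions]
  congr 1
  ext ⟨x, y⟩
  simp only [mem_filter, mem_product, mem_diag, id]
  constructor
  · rintro ⟨⟨hx, _⟩, rfl⟩
    exact ⟨hx, rfl⟩
  · rintro ⟨hx, rfl⟩
    exact ⟨⟨hx, hx⟩, rfl⟩

theorem sq_card_le_card_image_mul_collisions (s : Finset α) (g : α → β) :
    #s ^ 2 ≤ #(s.image g) * collisions s g := by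
  have hfibers : collisions s g = ∑ y ∈ s.image g, #{x ∈ s | g x = y} ^ 2 := by
    rw [collisions, card_eq_sum_card_fiberwise (f := fun p => g p.1) (t := s.image g)
      fun p hp => mem_image_of_mem g (mem_product.mp (mem_filter.mp hp).1).1]
    refine sum_congr rfl fun y _ => ?_
    rw [sq, ← card_product, filter_filter]
    congr 1
    ext ⟨x, x'⟩
    simp only [mem_filter, mem_product]
    constructor
    · rintro ⟨⟨hx, hx'⟩, hxx', rfl⟩
      exact ⟨⟨hx, rfl⟩, hx', hxx'.symm⟩
    · rintro ⟨⟨hx, rfl⟩, hx', hxx'⟩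
      exact ⟨⟨hx, hx'⟩, hxx'.symm, rfl⟩
  rw [hfibers, card_eq_sum_card_image g s]
  exact sq_sum_le_card_mul_sum_sq

theorem collisions_le_card_mul_card_ker {G : Type*} [AddGroup G] [Fintype G] [DecidableEq G]
    [AddGroup β] (f : G →+ β) (s : Finset G) :
    collisions s f ≤ #s * #{d | f d = 0} := by
  rw [collisions, ← card_product]
  refine card_le_card_of_injOn (fun p => (p.1, p.1 - p.2)) ?_ ?_
  · intro p hp
    simp only [coe_filter, mem_product, Set.mem_ofPred_eq] at hp
    simp [hp.1.1, hp.2]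
  · intro p _ p' _ h
    simp only [Prod.mk.injEq] at h
    obtain ⟨h1, h2⟩ := h
    exact Prod.ext h1 (by rw [h1] at h2; exact sub_right_injective h2)

end Collisions

theorem Fintype.card_matrix {m n R : Type*} [Fintype m] [Fintype n] [DecidableEq m]
    [DecidableEq n] [Fintype R] :
    Fintype.card (Matrix m n R) = Fintype.card R ^ (Fintype.card m * Fintype.card n) := by
  rw [mul_comm, pow_mul, ← Fintype.card_fun, ← Fintype.card_fun]
  rfl

namespace Matrix

variable {ι κ F : Type*} [Fintype ι] [DecidableEq ι] [Field F] [Fintype F] [DecidableEq F]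

theorem card_filter_vecMul_eq_zero_le [Fintype κ] {m : Matrix ι κ F} (hm : m ≠ 0) :
    #{v : ι → F | v ᵥ* m = 0} ≤ Fintype.card F ^ (Fintype.card ι - 1) := by
  set K := LinearMap.ker m.vecMulLinear
  have hK : K ≠ ⊤ := by
    contrapose! hm
    ext i j
    have : Pi.single i 1 ∈ K := hm ▸ Submodule.mem_top
    simpa using congrFun (LinearMap.mem_ker.mp this) j
  have hrank : Module.finrank F K < Fintype.card ι := by simpa using Submodule.finrank_lt hK
  calc #{v : ι → F | v ᵥ* m = 0} = Nat.card K := by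
        rw [← Nat.card_eq_finsetCard]
        exact Nat.card_congr (Equiv.subtypeEquivRight fun v => by simp [K])
    _ = Fintype.card F ^ Module.finrank F K := by
        rw [Module.natCard_eq_pow_finrank (K := F), Nat.card_eq_fintype_card]
    _ ≤ Fintype.card F ^ (Fintype.card ι - 1) := Nat.pow_le_pow_right Fintype.card_pos (by omega)

theorem card_filter_mul_eq_zero_le [Fintype κ] [DecidableEq κ] {m : Matrix ι ι F} (hm : m ≠ 0) :
    #{d : Matrix κ ι F | d * m = 0} ≤ Fintype.card F ^ ((Fintype.card ι - 1) * Fintype.card κ) := by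
  have hrows : #{d : Matrix κ ι F | d * m = 0} =
      #(Fintype.piFinset fun _ => {v : ι → F | v ᵥ* m = 0}) :=
    card_equiv Matrix.of.symm fun d => by
      simp only [mem_filter, mem_univ, true_and, Fintype.mem_piFinset]
      exact funext_iff
  rw [hrows, Fintype.card_piFinset, prod_const, card_univ, pow_mul]
  exact Nat.pow_le_pow_left (card_filter_vecMul_eq_zero_le hm) _

end Matrix

section TraceCharacters

variable {α ι F : Type*} [Fintype ι] [DecidableEq ι] [Field F] {ψ : AddChar F ℂ}

theorem exists_addChar_trace_mul_ne_one (hψ : ψ ≠ 0) {w : Matrix ι ι F} (hw : w ≠ 0) :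
    ∃ m, ψ (trace (m * w)) ≠ 1 := by
  obtain ⟨t, ht⟩ := AddChar.ne_zero_iff.mp hψ
  obtain ⟨i, j, hij⟩ : ∃ i j, w i j ≠ 0 := by
    by_contra! h
    exact hw (Matrix.ext h)
  refine ⟨single j i (t / w i j), ?_⟩
  rwa [trace_single_mul, smul_eq_mul, div_mul_cancel₀ t hij]

variable [Fintype F] [DecidableEq F]

theorem sum_addChar_trace_mul (hψ : ψ ≠ 0) (w : Matrix ι ι F) :
    ∑ m, ψ (trace (m * w)) = if w = 0 then (Fintype.card (Matrix ι ι F) : ℂ) else 0 := by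
  let χ : AddChar (Matrix ι ι F) ℂ :=
    ψ.compAddMonoidHom ((traceAddMonoidHom ι F).comp (AddMonoidHom.mulLeft w))
  have hχ : ∀ m, χ m = ψ (trace (m * w)) := fun m => by
    simp [χ, trace_mul_comm w m]
  have hχ_eq_zero : χ = 0 ↔ w = 0 := by
    refine ⟨fun h => ?_, fun h => ?_⟩
    · by_contra hw
      obtain ⟨m, hm⟩ := exists_addChar_trace_mul_ne_one hψ hw
      exact hm (by rw [← hχ, h]; rfl)
    · ext m
      simp [hχ, h]
  classical
  simp_rw [← hχ, AddChar.sum_eq_ite, hχ_eq_zero]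

theorem sum_norm_sq_sum_addChar_trace_mul (hψ : ψ ≠ 0) (s : Finset α) (g : α → Matrix ι ι F) :
    ∑ m, ‖∑ p ∈ s, ψ (trace (m * g p))‖ ^ 2 =
      Fintype.card (Matrix ι ι F) * collisions s g := by
  have hexpand : ∀ m, ((‖∑ p ∈ s, ψ (trace (m * g p))‖ ^ 2 : ℝ) : ℂ) =
      ∑ pp ∈ s ×ˢ s, ψ (trace (m * (g pp.1 - g pp.2))) := fun m => by
    rw [Complex.ofReal_pow, ← Complex.mul_conj', map_sum, sum_mul_sum, sum_product]
    simp_rw [← AddChar.map_neg_eq_conj, ← AddChar.map_add_eq_mul, ← trace_neg, ← trace_add,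
      ← Matrix.mul_neg, ← Matrix.mul_add, ← sub_eq_add_neg]
  apply Complex.ofReal_injective
  rw [Complex.ofReal_sum]
  simp_rw [hexpand]
  rw [sum_comm]
  simp_rw [sum_addChar_trace_mul hψ, sub_eq_zero]
  rw [sum_ite, sum_const_zero, add_zero, sum_const, nsmul_eq_mul, collisions]
  push_cast
  ring

theorem norm_sq_sum_sum_addChar_trace_mul_le (hψ : ψ ≠ 0) {m : Matrix ι ι F} (hm : m ≠ 0)
    (s : Finset (Matrix ι ι F)) :
    ‖∑ b ∈ s, ∑ c ∈ s, ψ (trace (m * (b * c)))‖ ^ 2 ≤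
      #s ^ 2 * Fintype.card (Matrix ι ι F) *
        Fintype.card F ^ ((Fintype.card ι - 1) * Fintype.card ι) := by
  have hcycle : ∀ b c : Matrix ι ι F, trace (m * (b * c)) = trace (b * (c * m)) := fun b c => by
    rw [trace_mul_comm, Matrix.mul_assoc]
  have hker : (collisions s (AddMonoidHom.mulRight m) : ℝ) ≤
      #s * Fintype.card F ^ ((Fintype.card ι - 1) * Fintype.card ι) := by
    have hker_nat := collisions_le_card_mul_card_ker (AddMonoidHom.mulRight m) s
    simp only [AddMonoidHom.coe_mulRight] at hker_nat
    exact_mod_cast hker_nat.trans (Nat.mul_le_mul_left _ (card_filter_mul_eq_zero_le hm))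
  calc ‖∑ b ∈ s, ∑ c ∈ s, ψ (trace (m * (b * c)))‖ ^ 2
      ≤ (∑ b ∈ s, ‖∑ c ∈ s, ψ (trace (b * (c * m)))‖) ^ 2 := by
        simp_rw [hcycle]
        gcongr
        exact norm_sum_le _ _
    _ ≤ #s * ∑ b ∈ s, ‖∑ c ∈ s, ψ (trace (b * (c * m)))‖ ^ 2 := sq_sum_le_card_mul_sum_sq
    _ ≤ #s * ∑ b, ‖∑ c ∈ s, ψ (trace (b * (c * m)))‖ ^ 2 := by
        gcongr
        exact subset_univ s
    _ = #s * (Fintype.card (Matrix ι ι F) * collisions s (AddMonoidHom.mulRight m)) := by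
        rw [← sum_norm_sq_sum_addChar_trace_mul hψ]
        rfl
    _ ≤ #s * (Fintype.card (Matrix ι ι F) *
          (#s * Fintype.card F ^ ((Fintype.card ι - 1) * Fintype.card ι))) := by
        gcongr
    _ = _ := by ring

end TraceCharacters

section XAddYZ

variable {ι F : Type*} [Fintype ι] [DecidableEq ι] [Field F] [Fintype F] [DecidableEq F]

theorem card_mul_collisions_add_mul_le (s : Finset (Matrix ι ι F)) :
    (Fintype.card (Matrix ι ι F) : ℝ) * collisions (s ×ˢ s ×ˢ s) (fun p => p.1 + p.2.1 * p.2.2) ≤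
      #s ^ 6 + #s ^ 3 * Fintype.card (Matrix ι ι F) ^ 2 *
        Fintype.card F ^ ((Fintype.card ι - 1) * Fintype.card ι) := by
  obtain ⟨ψ, hψ1⟩ := AddChar.exists_apply_ne_zero.mpr (one_ne_zero (α := F))
  have hψ : ψ ≠ 0 := AddChar.ne_zero_iff.mpr ⟨1, hψ1⟩
  set N := (Fintype.card (Matrix ι ι F) : ℝ)
  set K := (#s : ℝ) ^ 2 * N * Fintype.card F ^ ((Fintype.card ι - 1) * Fintype.card ι)
  set Ahat : Matrix ι ι F → ℂ := fun m => ∑ a ∈ s, ψ (trace (m * a))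
  set Rhat : Matrix ι ι F → ℂ := fun m => ∑ b ∈ s, ∑ c ∈ s, ψ (trace (m * (b * c)))
  have hsplit : ∀ m, ∑ p ∈ s ×ˢ s ×ˢ s, ψ (trace (m * (p.1 + p.2.1 * p.2.2))) = Ahat m * Rhat m :=
    fun m => by
      simp_rw [Ahat, Rhat, sum_product, Matrix.mul_add, trace_add, AddChar.map_add_eq_mul]
      rw [sum_mul]
      simp_rw [mul_sum]
  have hAhat : ∑ m, ‖Ahat m‖ ^ 2 = N * #s := by
    simpa [collisions_id] using sum_norm_sq_sum_addChar_trace_mul hψ s id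
  have hzero : ‖Ahat 0 * Rhat 0‖ ^ 2 = (#s : ℝ) ^ 6 := by
    simp only [zero_mul, trace_zero, AddChar.map_zero_eq_one, sum_const, nsmul_eq_mul, mul_one,
      Complex.norm_mul, RCLike.norm_natCast, Ahat, Rhat]
    ring
  have hnonzero : ∑ m ∈ univ.erase 0, ‖Ahat m * Rhat m‖ ^ 2 ≤ K * (N * #s) := by
    calc ∑ m ∈ univ.erase 0, ‖Ahat m * Rhat m‖ ^ 2 ≤ ∑ m ∈ univ.erase 0, K * ‖Ahat m‖ ^ 2 := by
          refine sum_le_sum fun m hm => ?_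
          rw [norm_mul, mul_pow, mul_comm]
          gcongr
          exact norm_sq_sum_sum_addChar_trace_mul_le hψ (ne_of_mem_erase hm) s
      _ ≤ K * ∑ m, ‖Ahat m‖ ^ 2 := by
          rw [← mul_sum]
          gcongr
          exact subset_univ _
      _ = K * (N * #s) := by rw [hAhat]
  rw [← sum_norm_sq_sum_addChar_trace_mul hψ, ← add_sum_erase _ _ (mem_univ 0)]
  simp_rw [hsplit]
  rw [hzero]
  linarith [hnonzero]

theorem pow_le_two_mul_card_image_add_mul (hι : 3 ≤ Fintype.card ι) (s : Finset (Matrix ι ι F))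
    (hs : Fintype.card F ^ (Fintype.card ι * Fintype.card ι - 1) ≤ #s) :
    Fintype.card F ^ (Fintype.card ι * Fintype.card ι) ≤
      2 * #((s ×ˢ s ×ˢ s).image fun p => p.1 + p.2.1 * p.2.2) := by
  set n := Fintype.card ι
  set q := Fintype.card F
  set E := collisions (s ×ˢ s ×ˢ s) (fun p => p.1 + p.2.1 * p.2.2)
  have hq : 1 ≤ q := Fintype.card_pos
  have hs_pos : 0 < #s := lt_of_lt_of_le (Nat.one_le_pow _ _ hq) hs
  have hexp : (q ^ (n * n)) ^ 2 * q ^ ((n - 1) * n) ≤ #s ^ 3 :=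
    calc (q ^ (n * n)) ^ 2 * q ^ ((n - 1) * n) = q ^ (2 * (n * n) + (n - 1) * n) := by
          rw [← pow_mul, ← pow_add, mul_comm (n * n)]
      _ ≤ q ^ ((n * n - 1) * 3) := Nat.pow_le_pow_right hq (by
          have : n ≤ n * n := Nat.le_mul_self n
          rw [Nat.sub_one_mul, Nat.sub_one_mul]
          omega)
      _ = (q ^ (n * n - 1)) ^ 3 := pow_mul _ _ _
      _ ≤ #s ^ 3 := Nat.pow_le_pow_left hs 3
  have henergy : q ^ (n * n) * E ≤ 2 * #s ^ 6 := by
    have h := card_mul_collisions_add_mul_le s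
    rw [Fintype.card_matrix (m := ι) (n := ι)] at h
    suffices ((q ^ (n * n) * E : ℕ) : ℝ) ≤ 2 * #s ^ 6 by exact_mod_cast this
    calc ((q ^ (n * n) * E : ℕ) : ℝ)
        ≤ #s ^ 6 + #s ^ 3 * ((q ^ (n * n)) ^ 2 * q ^ ((n - 1) * n) : ℕ) := by
          push_cast at h ⊢
          linarith
      _ ≤ #s ^ 6 + #s ^ 3 * #s ^ 3 := by gcongr; exact_mod_cast hexp
      _ = 2 * #s ^ 6 := by ring
  set S := (s ×ˢ s ×ˢ s).image fun p => p.1 + p.2.1 * p.2.2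
  have hcs : #s ^ 6 ≤ #S * E := by
    have h := sq_card_le_card_image_mul_collisions (s ×ˢ s ×ˢ s) (fun p => p.1 + p.2.1 * p.2.2)
    rw [card_product, card_product] at h
    exact le_of_eq_of_le (by ring) h
  have : q ^ (n * n) * #s ^ 6 ≤ 2 * #S * #s ^ 6 :=
    calc q ^ (n * n) * #s ^ 6 ≤ q ^ (n * n) * (#S * E) := Nat.mul_le_mul_left _ hcs
      _ = #S * (q ^ (n * n) * E) := by ring
      _ ≤ #S * (2 * #s ^ 6) := Nat.mul_le_mul_left _ henergy
      _ = 2 * #S * #s ^ 6 := by ring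
  exact Nat.le_of_mul_le_mul_right this (pow_pos hs_pos 6)

end XAddYZ

/-- x + yz is a moderate expander over M_n(F_q) with exponent one. -/
theorem moderate_expander_x_add_yz_Mn (n : ℕ) (hn : 3 ≤ n) :
    ∃ c C : ℝ, 0 < c ∧ 0 < C ∧
      ∀ (F : Type) [Field F] [Fintype F],
        Odd (Fintype.card F) →
        ∀ A : Set (Matrix (Fin n) (Fin n) F),
          C * (Fintype.card F : ℝ) ^ ((n : ℝ) ^ 2 - 1) ≤ (A.ncard : ℝ) →
          c * (Fintype.card F : ℝ) ^ ((n : ℝ) ^ 2) ≤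
            ({x | ∃ a₁ ∈ A, ∃ a₂ ∈ A, ∃ a₃ ∈ A, x = a₁ + a₂ * a₃}.ncard : ℝ) := by
  refine ⟨1 / 2, 1, by norm_num, one_pos, fun F _ _ _ A hA => ?_⟩
  classical
  have hsq : (n : ℝ) ^ 2 = (n * n : ℕ) := by push_cast; ring
  have hsq_sub : (n : ℝ) ^ 2 - 1 = (n * n - 1 : ℕ) := by
    rw [Nat.cast_sub (by nlinarith)]
    push_cast
    ring
  have himage : {x | ∃ a₁ ∈ A, ∃ a₂ ∈ A, ∃ a₃ ∈ A, x = a₁ + a₂ * a₃} =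
      ↑((A.toFinset ×ˢ A.toFinset ×ˢ A.toFinset).image fun p => p.1 + p.2.1 * p.2.2) := by
    ext x
    simp only [Set.mem_ofPred_eq, coe_image, Set.mem_image, coe_product, Set.mem_prod,
      Set.coe_toFinset, Prod.exists]
    aesop
  rw [hsq_sub, Real.rpow_natCast, one_mul, Set.ncard_eq_toFinset_card'] at hA
  rw [hsq, Real.rpow_natCast, himage, Set.ncard_coe_finset]
  have h := pow_le_two_mul_card_image_add_mul (ι := Fin n) (by simpa using hn) A.toFinset
    (by rw [Fintype.card_fin]; exact_mod_cast hA)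
  simp only [Fintype.card_fin] at h
  have h' : (Fintype.card F : ℝ) ^ (n * n) ≤
      2 * #((A.toFinset ×ˢ A.toFinset ×ˢ A.toFinset).image fun p => p.1 + p.2.1 * p.2.2) := by
    exact_mod_cast h
  linarith
end

section
/- There are constants c, C > 0 depending only on n such that the following holds. Let n ≥ 3, let q be an odd prime power, and let A ⊆ M_n(𝔽_q) with |A| ≥ C · q^{n²−1}. Then |{a₁(a₂ + a₃) : a₁, a₂, a₃ ∈ A}| ≥ c · q^{n²}. -/
open Finset

noncomputable section
namespace MEX

set_option linter.unusedSectionVars false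

variable {F : Type} [Field F] [Fintype F] [DecidableEq F]

private lemma psi_map_sum {ι : Type*} (ψ : AddChar F ℂ) (s : Finset ι) (f : ι → F) :
    ψ (∑ i ∈ s, f i) = ∏ i ∈ s, ψ (f i) := by
  induction s using Finset.cons_induction with
  | empty => simp
  | cons a s ha ih => rw [Finset.sum_cons, Finset.prod_cons, AddChar.map_add_eq_mul, ih]

private lemma sum_psi_mul (ψ : AddChar F ℂ) (hψ : ψ ≠ 1) {c : F} (hc : c ≠ 0) :
    ∑ s : F, ψ (s * c) = 0 := by
  rw [← AddChar.sum_eq_zero_of_ne_one hψ]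
  exact Fintype.sum_bijective _ (Equiv.mulRight₀ c hc).bijective _ _ fun s => rfl

private lemma sum_psi_row {n : ℕ} (ψ : AddChar F ℂ) (hψ : ψ ≠ 1) (w : Fin n → F) :
    ∑ v : Fin n → F, ψ (∑ j, v j * w j)
      = if w = 0 then ((Fintype.card F : ℂ)) ^ n else 0 := by
  calc ∑ v : Fin n → F, ψ (∑ j, v j * w j)
      = ∑ v ∈ Fintype.piFinset (fun _ : Fin n => (univ : Finset F)), ∏ j, ψ (v j * w j) := by
        rw [Fintype.piFinset_univ]
        exact Finset.sum_congr rfl fun v _ => psi_map_sum ψ _ _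
    _ = ∏ j, ∑ s : F, ψ (s * w j) :=
        Finset.sum_prod_piFinset (univ : Finset F) (fun j s => ψ (s * w j))
    _ = if w = 0 then ((Fintype.card F : ℂ)) ^ n else 0 := by
        by_cases hw : w = 0
        · subst hw
          simp [AddChar.map_zero_eq_one]
        · obtain ⟨j0, hj0⟩ : ∃ j, w j ≠ 0 := by
            by_contra h; push_neg at h; exact hw (funext h)
          rw [if_neg hw]
          exact Finset.prod_eq_zero (mem_univ j0) (sum_psi_mul ψ hψ hj0)

private lemma sum_psi_matrix {n : ℕ} (ψ : AddChar F ℂ) (hψ : ψ ≠ 1)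
    (x : Matrix (Fin n) (Fin n) F) :
    ∑ m : Matrix (Fin n) (Fin n) F, ψ ((m * x).trace)
      = if x = 0 then ((Fintype.card F : ℂ)) ^ (n * n) else 0 := by
  have htr : ∀ m : Matrix (Fin n) (Fin n) F, (m * x).trace = ∑ i, ∑ j, m i j * x j i := by
    intro m; simp [Matrix.trace, Matrix.diag, Matrix.mul_apply]
  calc ∑ m : Matrix (Fin n) (Fin n) F, ψ ((m * x).trace)
      = ∑ g : Fin n → Fin n → F, ψ (∑ i, ∑ j, g i j * x j i) :=
        (Fintype.sum_equiv (Matrix.of : (Fin n → Fin n → F) ≃ Matrix (Fin n) (Fin n) F)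
          (fun g => ψ (∑ i, ∑ j, g i j * x j i)) (fun m => ψ ((m * x).trace))
          (fun g => congrArg ψ (htr (Matrix.of g)).symm)).symm
    _ = ∑ g ∈ Fintype.piFinset (fun _ : Fin n => (univ : Finset (Fin n → F))),
          ∏ i, ψ (∑ j, g i j * x j i) := by
        rw [Fintype.piFinset_univ]
        exact Finset.sum_congr rfl fun g _ => psi_map_sum ψ _ _
    _ = ∏ i, ∑ r : Fin n → F, ψ (∑ j, r j * x j i) :=
        Finset.sum_prod_piFinset (univ : Finset (Fin n → F))
          (fun i r => ψ (∑ j, r j * x j i))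
    _ = ∏ i, (if (fun j => x j i) = (0 : Fin n → F) then ((Fintype.card F : ℂ)) ^ n else 0) :=
        Finset.prod_congr rfl fun i _ => sum_psi_row ψ hψ _
    _ = if x = 0 then ((Fintype.card F : ℂ)) ^ (n * n) else 0 := by
        by_cases hx : x = 0
        · subst hx
          have hcol : ∀ i : Fin n,
              (fun j => (0 : Matrix (Fin n) (Fin n) F) j i) = (0 : Fin n → F) :=
            fun i => funext fun j => rfl
          simp only [hcol, if_pos rfl, if_true, eq_self_iff_true]
          rw [Finset.prod_const, Finset.card_univ, Fintype.card_fin, ← pow_mul]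
        · obtain ⟨i0, j0, hij⟩ : ∃ i j, x i j ≠ 0 := by
            by_contra h; push_neg at h
            exact hx (Matrix.ext fun i j => h i j)
          rw [if_neg hx]
          refine Finset.prod_eq_zero (mem_univ j0) ?_
          rw [if_neg ?_]
          intro h
          exact hij (congrFun h i0)

private lemma sum_psi_matrix_pair {n : ℕ} (ψ : AddChar F ℂ) (hψ : ψ ≠ 1)
    (x y : Matrix (Fin n) (Fin n) F) :
    ∑ m : Matrix (Fin n) (Fin n) F,
        ψ ((m * x).trace) * (starRingEnd ℂ) (ψ ((m * y).trace))
      = if x = y then ((Fintype.card F : ℂ)) ^ (n * n) else 0 := by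
  have h1 : ∀ m : Matrix (Fin n) (Fin n) F,
      ψ ((m * x).trace) * (starRingEnd ℂ) (ψ ((m * y).trace))
        = ψ ((m * (x - y)).trace) := by
    intro m
    rw [← AddChar.map_neg_eq_conj, ← AddChar.map_add_eq_mul, Matrix.mul_sub,
      Matrix.trace_sub, sub_eq_add_neg]
  simp_rw [h1]
  rw [sum_psi_matrix ψ hψ]
  by_cases h : x = y
  · rw [if_pos (by rw [h, sub_self]), if_pos h]
  · rw [if_neg (fun hs => h (sub_eq_zero.mp hs)), if_neg h]


private lemma card_subtype_ne {n : ℕ} (k : Fin n) :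
    Fintype.card {j : Fin n // j ≠ k} = n - 1 := by
  simp [Fintype.card_subtype_compl]

private lemma card_ann_le {n : ℕ} {m : Matrix (Fin n) (Fin n) F} (hm : m ≠ 0) :
    ((univ : Finset (Matrix (Fin n) (Fin n) F)).filter fun d => d * m = 0).card
      ≤ Fintype.card F ^ ((n - 1) * n) := by
  obtain ⟨k, l, hkl⟩ : ∃ k l, m k l ≠ 0 := by
    by_contra h; push_neg at h; exact hm (Matrix.ext fun i j => h i j)
  have hcard : Fintype.card (Fin n → {j : Fin n // j ≠ k} → F)
      = Fintype.card F ^ ((n - 1) * n) := by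
    rw [Fintype.card_fun, Fintype.card_fun, card_subtype_ne, Fintype.card_fin, ← pow_mul]
  calc ((univ : Finset (Matrix (Fin n) (Fin n) F)).filter fun d => d * m = 0).card
      ≤ (univ : Finset (Fin n → {j : Fin n // j ≠ k} → F)).card := by
        refine Finset.card_le_card_of_injOn
          (fun d => fun i (j : {j : Fin n // j ≠ k}) => d i j)
          (fun d _ => mem_univ _) ?_
        intro d hd d' hd' heq
        simp only [coe_filter, Set.mem_setOf_eq, mem_univ, true_and] at hd hd'
        have hrow : ∀ (dd : Matrix (Fin n) (Fin n) F), dd * m = 0 → ∀ i,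
            dd i k * m k l + ∑ jj ∈ univ.erase k, dd i jj * m jj l = 0 := by
          intro dd hdd i
          have h0 : (dd * m) i l = 0 := by rw [hdd]; rfl
          rw [Matrix.mul_apply] at h0
          exact (Finset.add_sum_erase univ (fun jj => dd i jj * m jj l) (mem_univ k)).trans h0
        refine Matrix.ext fun i j => ?_
        rcases eq_or_ne j k with hjk | hjk
        · have e1 := hrow d hd i
          have e2 := hrow d' hd' i
          have esum : ∑ jj ∈ univ.erase k, d i jj * m jj l
              = ∑ jj ∈ univ.erase k, d' i jj * m jj l := by
            refine Finset.sum_congr rfl fun jj hjj => ?_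
            have hne : jj ≠ k := Finset.ne_of_mem_erase hjj
            have := congrFun (congrFun heq i) ⟨jj, hne⟩
            simp only at this
            rw [this]
          rw [esum] at e1
          have hmul : d i k * m k l = d' i k * m k l :=
            (eq_neg_of_add_eq_zero_left e1).trans (eq_neg_of_add_eq_zero_left e2).symm
          have hk : d i k = d' i k := mul_right_cancel₀ hkl hmul
          rw [hjk]; exact hk
        · exact congrFun (congrFun heq i) ⟨j, hjk⟩
    _ = Fintype.card F ^ ((n - 1) * n) := by rw [Finset.card_univ, hcard]


private lemma card_nonunit_le {n : ℕ} (hn1 : 1 ≤ n) :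
    ((univ : Finset (Matrix (Fin n) (Fin n) F)).filter fun m => ¬ IsUnit m).card
      ≤ n * Fintype.card F ^ (n * n - 1) := by
  classical
  set q := Fintype.card F with hq
  -- the parametrization maps
  let Ψ : (k : Fin n) → (({j : Fin n // j ≠ k} → Fin n → F) × ({j : Fin n // j ≠ k} → F))
      → Matrix (Fin n) (Fin n) F :=
    fun k rc => Matrix.of fun i => if h : i = k then ∑ j, rc.2 j • rc.1 j else rc.1 ⟨i, h⟩
  have hsub : ((univ : Finset (Matrix (Fin n) (Fin n) F)).filter fun m => ¬ IsUnit m)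
      ⊆ univ.biUnion (fun k : Fin n => univ.image (Ψ k)) := by
    intro m hm
    rw [Finset.mem_filter] at hm
    have hdet : m.det = 0 := by
      by_contra hd
      exact hm.2 ((Matrix.isUnit_iff_isUnit_det m).mpr (isUnit_iff_ne_zero.mpr hd))
    obtain ⟨v, hv0, hvm⟩ := Matrix.exists_vecMul_eq_zero_iff.mpr hdet
    obtain ⟨k, hk⟩ : ∃ k, v k ≠ 0 := by
      by_contra h; push_neg at h; exact hv0 (funext h)
    refine Finset.mem_biUnion.mpr ⟨k, mem_univ k, Finset.mem_image.mpr
      ⟨(fun j => m j.val, fun j => -(v j.val / v k)), mem_univ _, ?_⟩⟩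
    refine Matrix.ext fun i jj => ?_
    show (Matrix.of _ : Matrix (Fin n) (Fin n) F) i jj = m i jj
    rw [Matrix.of_apply]
    by_cases hik : i = k
    · rw [dif_pos hik]
      have h0 : ∑ i0, v i0 * m i0 jj = 0 := by
        have := congrFun hvm jj
        simpa [Matrix.vecMul, dotProduct] using this
      have h1 : v k * m k jj + ∑ i0 ∈ univ.erase k, v i0 * m i0 jj = 0 :=
        (Finset.add_sum_erase univ (fun i0 => v i0 * m i0 jj) (mem_univ k)).trans h0
      have h2 : ∑ i0 ∈ univ.erase k, v i0 * m i0 jj = -(v k * m k jj) :=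
        eq_neg_of_add_eq_zero_right h1
      have hsum : ((∑ j : {j : Fin n // j ≠ k}, (-(v j.val / v k)) • (fun jj' => m j.val jj'))) jj
          = ∑ j : {j : Fin n // j ≠ k}, (-(v j.val / v k)) * m j.val jj := by
        rw [Finset.sum_apply]
        exact Finset.sum_congr rfl fun j _ => rfl
      rw [hsum]
      have hsub2 : ∑ j : {j : Fin n // j ≠ k}, (-(v j.val / v k)) * m j.val jj
          = ∑ i0 ∈ univ.erase k, (-(v i0 / v k)) * m i0 jj :=
        (Finset.sum_subtype (p := fun j : Fin n => j ≠ k) (univ.erase k)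
          (fun x => by simp [Finset.mem_erase]) (fun i0 => (-(v i0 / v k)) * m i0 jj)).symm
      rw [hsub2]
      have : ∑ i0 ∈ univ.erase k, (-(v i0 / v k)) * m i0 jj
          = (-(1 / v k)) * ∑ i0 ∈ univ.erase k, v i0 * m i0 jj := by
        rw [Finset.mul_sum]
        refine Finset.sum_congr rfl fun i0 _ => ?_
        field_simp
      rw [this, h2, hik]
      field_simp
    · rw [dif_neg hik]
  calc ((univ : Finset (Matrix (Fin n) (Fin n) F)).filter fun m => ¬ IsUnit m).card
      ≤ (univ.biUnion (fun k : Fin n => univ.image (Ψ k))).card := Finset.card_le_card hsub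
    _ ≤ ∑ k : Fin n, (univ.image (Ψ k)).card := Finset.card_biUnion_le
    _ ≤ ∑ _k : Fin n, q ^ (n * n - 1) := by
        refine Finset.sum_le_sum fun k _ => ?_
        calc (univ.image (Ψ k)).card
            ≤ (univ : Finset (({j : Fin n // j ≠ k} → Fin n → F) × ({j : Fin n // j ≠ k} → F))).card :=
              Finset.card_image_le
          _ = q ^ (n * n - 1) := by
              rw [Finset.card_univ]
              simp only [Fintype.card_prod, Fintype.card_fun, card_subtype_ne, Fintype.card_fin]
              rw [← pow_mul, ← pow_add]
              congr 1
              obtain ⟨d, rfl⟩ : ∃ d, n = d + 1 := ⟨n - 1, by omega⟩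
              have h3 : (d + 1) * (d + 1) = (d + 1) * d + d + 1 := by ring
              have h4 : (d + 1) * (d + 1 - 1) + (d + 1 - 1) = (d + 1) * d + d := by
                simp
              rw [h3, h4, Nat.add_sub_cancel]
    _ = n * q ^ (n * n - 1) := by rw [Finset.sum_const, Finset.card_univ, Fintype.card_fin,
          smul_eq_mul]


private def FT {n : ℕ} (ψ : AddChar F ℂ) (𝒜 : Finset (Matrix (Fin n) (Fin n) F))
    (u : Matrix (Fin n) (Fin n) F) : ℂ :=
  ∑ a ∈ 𝒜, ψ ((u * a).trace)

private lemma parseval_complex {n : ℕ} (ψ : AddChar F ℂ) (hψ : ψ ≠ 1)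
    (𝒜 : Finset (Matrix (Fin n) (Fin n) F)) :
    ∑ u : Matrix (Fin n) (Fin n) F, FT ψ 𝒜 u * (starRingEnd ℂ) (FT ψ 𝒜 u)
      = ((Fintype.card F : ℂ)) ^ (n * n) * 𝒜.card := by
  have expand : ∀ u : Matrix (Fin n) (Fin n) F, FT ψ 𝒜 u * (starRingEnd ℂ) (FT ψ 𝒜 u)
      = ∑ x ∈ 𝒜, ∑ y ∈ 𝒜, ψ ((u * x).trace) * (starRingEnd ℂ) (ψ ((u * y).trace)) := by
    intro u
    rw [FT, map_sum, Finset.sum_mul_sum]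
  simp_rw [expand]
  rw [Finset.sum_comm]
  have swap2 : ∀ x ∈ 𝒜, (∑ u : Matrix (Fin n) (Fin n) F, ∑ y ∈ 𝒜,
      ψ ((u * x).trace) * (starRingEnd ℂ) (ψ ((u * y).trace)))
      = ∑ y ∈ 𝒜, ∑ u : Matrix (Fin n) (Fin n) F,
        ψ ((u * x).trace) * (starRingEnd ℂ) (ψ ((u * y).trace)) :=
    fun x _ => Finset.sum_comm
  rw [Finset.sum_congr rfl swap2]
  have inner : ∀ x ∈ 𝒜, (∑ y ∈ 𝒜, ∑ u : Matrix (Fin n) (Fin n) F,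
      ψ ((u * x).trace) * (starRingEnd ℂ) (ψ ((u * y).trace)))
      = ((Fintype.card F : ℂ)) ^ (n * n) := by
    intro x hx
    have : ∀ y ∈ 𝒜, (∑ u : Matrix (Fin n) (Fin n) F,
        ψ ((u * x).trace) * (starRingEnd ℂ) (ψ ((u * y).trace)))
        = if x = y then ((Fintype.card F : ℂ)) ^ (n * n) else 0 :=
      fun y _ => sum_psi_matrix_pair ψ hψ x y
    rw [Finset.sum_congr rfl this, Finset.sum_ite_eq 𝒜 x
      (fun _ => ((Fintype.card F : ℂ)) ^ (n * n)), if_pos hx]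
  rw [Finset.sum_congr rfl inner, Finset.sum_const, nsmul_eq_mul, mul_comm]

private lemma parseval {n : ℕ} (ψ : AddChar F ℂ) (hψ : ψ ≠ 1)
    (𝒜 : Finset (Matrix (Fin n) (Fin n) F)) :
    ∑ u : Matrix (Fin n) (Fin n) F, Complex.normSq (FT ψ 𝒜 u)
      = ((Fintype.card F : ℝ)) ^ (n * n) * 𝒜.card := by
  have key := parseval_complex ψ hψ 𝒜
  simp_rw [Complex.mul_conj] at key
  exact_mod_cast key

private lemma parseval_twist_complex {n : ℕ} (ψ : AddChar F ℂ) (hψ : ψ ≠ 1)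
    (𝒜 : Finset (Matrix (Fin n) (Fin n) F)) (m : Matrix (Fin n) (Fin n) F) :
    ∑ b : Matrix (Fin n) (Fin n) F, FT ψ 𝒜 (m * b) * (starRingEnd ℂ) (FT ψ 𝒜 (m * b))
      = ((Fintype.card F : ℂ)) ^ (n * n)
          * ((𝒜 ×ˢ 𝒜).filter fun p => p.1 * m = p.2 * m).card := by
  have tr3 : ∀ b x : Matrix (Fin n) (Fin n) F, ((m * b) * x).trace = (b * (x * m)).trace := by
    intro b x
    rw [mul_assoc, Matrix.trace_mul_comm, mul_assoc]
  have expand : ∀ b : Matrix (Fin n) (Fin n) F,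
      FT ψ 𝒜 (m * b) * (starRingEnd ℂ) (FT ψ 𝒜 (m * b))
      = ∑ x ∈ 𝒜, ∑ y ∈ 𝒜, ψ ((b * (x * m)).trace) * (starRingEnd ℂ) (ψ ((b * (y * m)).trace)) := by
    intro b
    rw [FT, map_sum, Finset.sum_mul_sum]
    refine Finset.sum_congr rfl fun x _ => Finset.sum_congr rfl fun y _ => ?_
    rw [tr3 b x, tr3 b y]
  simp_rw [expand]
  rw [Finset.sum_comm]
  have swap2 : ∀ x ∈ 𝒜, (∑ b : Matrix (Fin n) (Fin n) F, ∑ y ∈ 𝒜,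
      ψ ((b * (x * m)).trace) * (starRingEnd ℂ) (ψ ((b * (y * m)).trace)))
      = ∑ y ∈ 𝒜, ∑ b : Matrix (Fin n) (Fin n) F,
        ψ ((b * (x * m)).trace) * (starRingEnd ℂ) (ψ ((b * (y * m)).trace)) :=
    fun x _ => Finset.sum_comm
  rw [Finset.sum_congr rfl swap2]
  have inner : ∀ x ∈ 𝒜, ∀ y ∈ 𝒜, (∑ b : Matrix (Fin n) (Fin n) F,
      ψ ((b * (x * m)).trace) * (starRingEnd ℂ) (ψ ((b * (y * m)).trace)))
      = if x * m = y * m then ((Fintype.card F : ℂ)) ^ (n * n) else 0 :=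
    fun x _ y _ => sum_psi_matrix_pair ψ hψ (x * m) (y * m)
  rw [Finset.sum_congr rfl (fun x hx => Finset.sum_congr rfl (inner x hx))]
  rw [← Finset.sum_product']
  rw [← Finset.sum_filter]
  rw [Finset.sum_const, nsmul_eq_mul, mul_comm]

private lemma parseval_twist {n : ℕ} (ψ : AddChar F ℂ) (hψ : ψ ≠ 1)
    (𝒜 : Finset (Matrix (Fin n) (Fin n) F)) (m : Matrix (Fin n) (Fin n) F) :
    ∑ b : Matrix (Fin n) (Fin n) F, Complex.normSq (FT ψ 𝒜 (m * b))
      = ((Fintype.card F : ℝ)) ^ (n * n)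
          * ((𝒜 ×ˢ 𝒜).filter fun p => p.1 * m = p.2 * m).card := by
  have key := parseval_twist_complex ψ hψ 𝒜 m
  simp_rw [Complex.mul_conj] at key
  exact_mod_cast key


private lemma D_le {n : ℕ} (𝒜 : Finset (Matrix (Fin n) (Fin n) F))
    {m : Matrix (Fin n) (Fin n) F} (hm : m ≠ 0) :
    (((𝒜 ×ˢ 𝒜).filter fun p => p.1 * m = p.2 * m).card)
      ≤ 𝒜.card * Fintype.card F ^ ((n - 1) * n) := by
  have hfib := Finset.card_eq_sum_card_fiberwise
    (f := fun p : Matrix (Fin n) (Fin n) F × Matrix (Fin n) (Fin n) F => p.1)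
    (s := (𝒜 ×ˢ 𝒜).filter fun p => p.1 * m = p.2 * m) (t := 𝒜)
    (fun p hp => (Finset.mem_product.mp (Finset.mem_filter.mp hp).1).1)
  rw [hfib]
  have hbound : ∀ x ∈ 𝒜,
      (((𝒜 ×ˢ 𝒜).filter fun p => p.1 * m = p.2 * m).filter fun p => p.1 = x).card
        ≤ Fintype.card F ^ ((n - 1) * n) := by
    intro x hx
    refine le_trans (Finset.card_le_card_of_injOn (fun p => p.2 - x)
      (fun p hp => ?_) ?_) (card_ann_le hm)
    · simp only [Finset.mem_coe, Finset.mem_filter, Finset.mem_product] at hp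
      obtain ⟨⟨⟨h1, h2⟩, h3⟩, h4⟩ := hp
      rw [Finset.mem_coe, Finset.mem_filter]
      refine ⟨mem_univ _, ?_⟩
      rw [Matrix.sub_mul, ← h3, h4, sub_self]
    · intro p hp p' hp' hpp
      simp only [Finset.coe_filter, Set.mem_setOf_eq, Finset.mem_filter] at hp hp'
      have h2 : p.2 = p'.2 := sub_left_inj.mp hpp
      have h1 : p.1 = p'.1 := hp.2.trans hp'.2.symm
      exact Prod.ext h1 h2
  calc ∑ x ∈ 𝒜, (((𝒜 ×ˢ 𝒜).filter fun p => p.1 * m = p.2 * m).filter fun p => p.1 = x).card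
      ≤ ∑ _x ∈ 𝒜, Fintype.card F ^ ((n - 1) * n) := Finset.sum_le_sum hbound
    _ = 𝒜.card * Fintype.card F ^ ((n - 1) * n) := by
        rw [Finset.sum_const, smul_eq_mul]


private lemma final_numeric {n q : ℕ} (hn : 3 ≤ n) (hq1 : (1:ℝ) ≤ (q:ℝ))
    (a p S E : ℝ)
    (ha : (2 * n : ℝ) * (q:ℝ) ^ (n * n - 1) ≤ a)
    (hp1 : a ≤ p + (n:ℝ) * (q:ℝ)^(n*n-1))
    (hp0 : 0 ≤ p) (hS0 : 0 ≤ S) (hE0 : 0 ≤ E)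
    (hCS : (p * (a * a))^2 ≤ S * E)
    (hsplit : (q:ℝ)^(n*n) * E ≤ (p*(a*a))^2
        + ((q:ℝ)^(n*n) * (a * (q:ℝ)^((n-1)*n))) * (p * ((q:ℝ)^(n*n) * a))) :
    (q:ℝ)^(n*n) ≤ 2 * S := by
  have hq0 : (0:ℝ) < (q:ℝ) := by linarith
  have hn3 : (3:ℝ) ≤ (n:ℝ) := by exact_mod_cast hn
  have hx0 : (0:ℝ) < (q:ℝ)^(n*n-1) := pow_pos hq0 _
  have hapos : (0:ℝ) < a := by nlinarith [hx0]
  have hphalf : a/2 ≤ p := by nlinarith [hx0]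
  have hppos : (0:ℝ) < p := by linarith
  have hexp : (q:ℝ)^(n*n) * (q:ℝ)^(n*n) * (q:ℝ)^((n-1)*n) ≤ ((q:ℝ)^(n*n-1))^3 := by
    rw [← pow_add, ← pow_add, ← pow_mul]
    refine pow_le_pow_right₀ hq1 ?_
    have e1 : (n-1)*n = n*n - n := by rw [Nat.sub_mul, one_mul]
    have hnn : n ≤ n * n := by nlinarith
    rw [e1]
    generalize hN : n * n = N at hnn ⊢
    omega
  have hxa : (q:ℝ)^(n*n-1) ≤ a/2 := by
    nlinarith [mul_nonneg (show (0:ℝ) ≤ (n:ℝ) - 3 by linarith) hx0.le]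
  have hq3 : ((q:ℝ)^(n*n-1))^3 ≤ (a/2)^3 := pow_le_pow_left₀ hx0.le hxa 3
  have hstar : (q:ℝ)^(n*n) * (q:ℝ)^(n*n) * (q:ℝ)^((n-1)*n) ≤ p * a^2 := by
    have h8 : (a/2)^3 ≤ p * a^2 := by nlinarith [sq_nonneg a]
    exact hexp.trans (hq3.trans h8)
  have hMxT : ((q:ℝ)^(n*n) * (a * (q:ℝ)^((n-1)*n))) * (p * ((q:ℝ)^(n*n) * a))
      ≤ (p*(a*a))^2 := by
    have hprod := mul_le_mul_of_nonneg_right hstar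
      (show (0:ℝ) ≤ p * (a * a) by positivity)
    nlinarith [hprod]
  have hfinal : (q:ℝ)^(n*n) * E ≤ 2 * (p*(a*a))^2 := by linarith
  have hT2pos : (0:ℝ) < (p*(a*a))^2 := by positivity
  have hchain : (q:ℝ)^(n*n) * (p*(a*a))^2 ≤ (2 * S) * (p*(a*a))^2 := by
    calc (q:ℝ)^(n*n) * (p*(a*a))^2
        ≤ (q:ℝ)^(n*n) * (S * E) := by
          refine mul_le_mul_of_nonneg_left hCS (by positivity)
      _ = S * ((q:ℝ)^(n*n) * E) := by ring
      _ ≤ S * (2 * (p*(a*a))^2) := mul_le_mul_of_nonneg_left hfinal hS0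
      _ = (2 * S) * (p*(a*a))^2 := by ring
  exact le_of_mul_le_mul_right hchain hT2pos

private theorem main_bound {n : ℕ} (hn : 3 ≤ n)
    (𝒜 : Finset (Matrix (Fin n) (Fin n) F))
    (hA : (2 * n : ℝ) * (Fintype.card F : ℝ) ^ (n * n - 1) ≤ (𝒜.card : ℝ)) :
    ((Fintype.card F : ℝ)) ^ (n * n)
      ≤ 2 * ((((𝒜.filter (IsUnit : Matrix (Fin n) (Fin n) F → Prop)) ×ˢ 𝒜 ×ˢ 𝒜).image
          (fun t : Matrix (Fin n) (Fin n) F × Matrix (Fin n) (Fin n) F × Matrix (Fin n) (Fin n) F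
            => t.1 * (t.2.1 + t.2.2))).card : ℝ) := by
  obtain ⟨ψ, hψ1⟩ := (AddChar.exists_apply_ne_zero (a := (1:F))).mpr one_ne_zero
  have hψ : ψ ≠ 1 := by
    intro h; rw [h] at hψ1; exact hψ1 rfl
  set q : ℕ := Fintype.card F with hqdef
  have hq1 : (1:ℝ) ≤ (q:ℝ) := by
    have := Fintype.card_pos (α := F); exact_mod_cast this
  have hqpos : (0:ℝ) < (q:ℝ) := lt_of_lt_of_le zero_lt_one hq1
  have hn3 : (3:ℝ) ≤ (n:ℝ) := by exact_mod_cast hn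
  set A' : Finset (Matrix (Fin n) (Fin n) F)
    := 𝒜.filter (IsUnit : Matrix (Fin n) (Fin n) F → Prop) with hA'def
  set T := A' ×ˢ 𝒜 ×ˢ 𝒜 with hTdef
  set vf : Matrix (Fin n) (Fin n) F × Matrix (Fin n) (Fin n) F × Matrix (Fin n) (Fin n) F
      → Matrix (Fin n) (Fin n) F := fun t => t.1 * (t.2.1 + t.2.2) with hvfdef
  set S' := T.image vf with hS'def
  set Ecnt := ((T ×ˢ T).filter fun p => vf p.1 = vf p.2).card with hEdef
  have hTcard : T.card = A'.card * (𝒜.card * 𝒜.card) := by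
    rw [hTdef, Finset.card_product, Finset.card_product]
  -- Cauchy-Schwarz step
  have hsum1 : ∑ l ∈ S', ((T.filter fun t => vf t = l).card : ℝ) = (T.card : ℝ) := by
    rw [Finset.card_eq_sum_card_image vf T]
    push_cast
    rfl
  have hsum2 : (Ecnt : ℝ) = ∑ l ∈ S', ((T.filter fun t => vf t = l).card : ℝ)^2 := by
    have h1 : Ecnt = ∑ l ∈ S',
        (((T ×ˢ T).filter fun p => vf p.1 = vf p.2).filter fun p => vf p.1 = l).card :=
      Finset.card_eq_sum_card_fiberwise (fun p hp =>
        Finset.mem_image_of_mem vf (Finset.mem_product.mp (Finset.mem_filter.mp hp).1).1)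
    have h2 : ∀ l : Matrix (Fin n) (Fin n) F,
        (((T ×ˢ T).filter fun p => vf p.1 = vf p.2).filter fun p => vf p.1 = l)
          = (T.filter fun t => vf t = l) ×ˢ (T.filter fun t => vf t = l) := by
      intro l
      ext p
      simp only [Finset.mem_filter, Finset.mem_product]
      constructor
      · rintro ⟨⟨⟨hp1, hp2⟩, heq⟩, hl⟩
        exact ⟨⟨hp1, hl⟩, ⟨hp2, by rw [← heq]; exact hl⟩⟩
      · rintro ⟨⟨hp1, hl1⟩, hp2, hl2⟩
        exact ⟨⟨⟨hp1, hp2⟩, hl1.trans hl2.symm⟩, hl1⟩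
    rw [h1]
    push_cast
    refine Finset.sum_congr rfl fun l _ => ?_
    rw [h2 l, Finset.card_product]
    push_cast
    ring
  have hCS : ((T.card : ℝ))^2 ≤ (S'.card : ℝ) * (Ecnt : ℝ) := by
    have h := Finset.sum_mul_sq_le_sq_mul_sq S' (fun _ => (1:ℝ))
      (fun l => ((T.filter fun t => vf t = l).card : ℝ))
    simp only [one_mul, one_pow] at h
    rw [hsum1, Finset.sum_const, nsmul_eq_mul, mul_one] at h
    rw [hsum2]
    exact h
  -- Fourier identity
  set G : Matrix (Fin n) (Fin n) F → ℂ := fun m => ∑ t ∈ T, ψ ((m * vf t).trace) with hGdef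
  have keyC : ∑ m : Matrix (Fin n) (Fin n) F, G m * (starRingEnd ℂ) (G m)
      = ((q:ℂ))^(n*n) * (Ecnt : ℂ) := by
    have expand : ∀ m : Matrix (Fin n) (Fin n) F, G m * (starRingEnd ℂ) (G m)
        = ∑ t ∈ T, ∑ s2 ∈ T, ψ ((m * vf t).trace) * (starRingEnd ℂ) (ψ ((m * vf s2).trace)) := by
      intro m
      rw [hGdef]
      dsimp only
      rw [map_sum, Finset.sum_mul_sum]
    simp_rw [expand]
    rw [Finset.sum_comm]
    have swap2 : ∀ t ∈ T, (∑ m : Matrix (Fin n) (Fin n) F, ∑ s2 ∈ T,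
        ψ ((m * vf t).trace) * (starRingEnd ℂ) (ψ ((m * vf s2).trace)))
        = ∑ s2 ∈ T, ∑ m : Matrix (Fin n) (Fin n) F,
          ψ ((m * vf t).trace) * (starRingEnd ℂ) (ψ ((m * vf s2).trace)) :=
      fun t _ => Finset.sum_comm
    rw [Finset.sum_congr rfl swap2]
    have inner : ∀ t ∈ T, ∀ s2 ∈ T, (∑ m : Matrix (Fin n) (Fin n) F,
        ψ ((m * vf t).trace) * (starRingEnd ℂ) (ψ ((m * vf s2).trace)))
        = if vf t = vf s2 then ((q:ℂ))^(n*n) else 0 :=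
      fun t _ s2 _ => sum_psi_matrix_pair ψ hψ (vf t) (vf s2)
    rw [Finset.sum_congr rfl (fun t ht => Finset.sum_congr rfl (inner t ht))]
    rw [← Finset.sum_product', ← Finset.sum_filter, Finset.sum_const, nsmul_eq_mul, mul_comm]
  have keyR : ∑ m : Matrix (Fin n) (Fin n) F, Complex.normSq (G m)
      = ((q:ℝ))^(n*n) * (Ecnt : ℝ) := by
    have h := keyC
    simp_rw [Complex.mul_conj] at h
    exact_mod_cast h
  -- decomposition of G
  have hGdecomp : ∀ m : Matrix (Fin n) (Fin n) F, G m = ∑ a ∈ A', (FT ψ 𝒜 (m * a))^2 := by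
    intro m
    rw [hGdef]
    dsimp only
    rw [hTdef, Finset.sum_product]
    refine Finset.sum_congr rfl fun a _ => ?_
    rw [Finset.sum_product]
    have hsplit : ∀ b c : Matrix (Fin n) (Fin n) F,
        ψ ((m * vf (a, b, c)).trace) = ψ (((m*a) * b).trace) * ψ (((m*a) * c).trace) := by
      intro b c
      have hmat : m * vf (a, b, c) = (m*a)*b + (m*a)*c := by
        show m * (a * (b + c)) = _
        noncomm_ring
      rw [hmat, Matrix.trace_add, AddChar.map_add_eq_mul]
    simp_rw [hsplit]
    rw [← Finset.sum_mul_sum, sq]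
    rfl
  have hG0 : Complex.normSq (G 0) = ((T.card:ℝ))^2 := by
    have hg : G 0 = (T.card : ℂ) := by
      rw [hGdef]
      dsimp only
      have h0 : ∀ t ∈ T, ψ (((0 : Matrix (Fin n) (Fin n) F) * vf t).trace) = 1 := by
        intro t _
        rw [zero_mul, Matrix.trace_zero, AddChar.map_zero_eq_one]
      rw [Finset.sum_congr rfl h0, Finset.sum_const, nsmul_eq_mul, mul_one]
    rw [hg, Complex.normSq_natCast]
    push_cast
    ring
  set Pm : Matrix (Fin n) (Fin n) F → ℝ
    := fun m => ∑ a ∈ A', Complex.normSq (FT ψ 𝒜 (m * a)) with hPmdef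
  have hPm0 : ∀ m, 0 ≤ Pm m := fun m => Finset.sum_nonneg fun a _ => Complex.normSq_nonneg _
  have hGP : ∀ m, Complex.normSq (G m) ≤ (Pm m)^2 := by
    intro m
    have h1 : ‖G m‖ ≤ Pm m := by
      rw [hGdecomp m]
      refine (norm_sum_le _ _).trans (le_of_eq ?_)
      refine Finset.sum_congr rfl fun a _ => ?_
      rw [norm_pow, Complex.sq_norm]
    calc Complex.normSq (G m) = ‖G m‖ ^ 2 := Complex.normSq_eq_norm_sq _
      _ ≤ (Pm m)^2 := pow_le_pow_left₀ (norm_nonneg _) h1 2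
  have hMx : ∀ m : Matrix (Fin n) (Fin n) F, m ≠ 0 →
      Pm m ≤ ((q:ℝ))^(n*n) * ((𝒜.card : ℝ) * ((q:ℝ))^((n-1)*n)) := by
    intro m hm
    have step1 : Pm m ≤ ∑ b : Matrix (Fin n) (Fin n) F, Complex.normSq (FT ψ 𝒜 (m * b)) := by
      rw [hPmdef]
      exact Finset.sum_le_sum_of_subset_of_nonneg (Finset.subset_univ A')
        (fun b _ _ => Complex.normSq_nonneg _)
    have step3 : ((((𝒜 ×ˢ 𝒜).filter fun p => p.1 * m = p.2 * m).card : ℝ))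
        ≤ (𝒜.card : ℝ) * ((q:ℝ))^((n-1)*n) := by
      have := D_le 𝒜 hm
      exact_mod_cast this
    calc Pm m ≤ ∑ b : Matrix (Fin n) (Fin n) F, Complex.normSq (FT ψ 𝒜 (m * b)) := step1
      _ = ((q:ℝ))^(n*n) * (((𝒜 ×ˢ 𝒜).filter fun p => p.1 * m = p.2 * m).card : ℝ) :=
          parseval_twist ψ hψ 𝒜 m
      _ ≤ ((q:ℝ))^(n*n) * ((𝒜.card : ℝ) * ((q:ℝ))^((n-1)*n)) :=
          mul_le_mul_of_nonneg_left step3 (by positivity)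
  have hPsum : ∑ m ∈ (univ : Finset (Matrix (Fin n) (Fin n) F)).erase 0, Pm m
      ≤ (A'.card : ℝ) * (((q:ℝ))^(n*n) * (𝒜.card : ℝ)) := by
    have h1 : ∑ m ∈ (univ : Finset (Matrix (Fin n) (Fin n) F)).erase 0, Pm m
        ≤ ∑ m : Matrix (Fin n) (Fin n) F, Pm m :=
      Finset.sum_le_sum_of_subset_of_nonneg (Finset.erase_subset _ _) (fun m _ _ => hPm0 m)
    have h2 : ∑ m : Matrix (Fin n) (Fin n) F, Pm m
        = (A'.card : ℝ) * (((q:ℝ))^(n*n) * (𝒜.card : ℝ)) := by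
      rw [hPmdef]
      rw [Finset.sum_comm]
      have h3 : ∀ a ∈ A', ∑ m : Matrix (Fin n) (Fin n) F, Complex.normSq (FT ψ 𝒜 (m * a))
          = ((q:ℝ))^(n*n) * (𝒜.card : ℝ) := by
        intro a ha
        have hu : IsUnit a := (Finset.mem_filter.mp ha).2
        have hre := Equiv.sum_comp (Units.mulRight hu.unit)
          (fun u => Complex.normSq (FT ψ 𝒜 u))
        have hper : ∀ m : Matrix (Fin n) (Fin n) F,
            Complex.normSq (FT ψ 𝒜 (m * a))
              = Complex.normSq (FT ψ 𝒜 ((Units.mulRight hu.unit) m)) := by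
          intro m
          have hh : ((Units.mulRight hu.unit) m) = m * a := by
            show m * (hu.unit : Matrix (Fin n) (Fin n) F) = m * a
            rw [IsUnit.unit_spec]
          rw [hh]
        calc ∑ m : Matrix (Fin n) (Fin n) F, Complex.normSq (FT ψ 𝒜 (m * a))
            = ∑ m : Matrix (Fin n) (Fin n) F,
                Complex.normSq (FT ψ 𝒜 ((Units.mulRight hu.unit) m)) :=
              Finset.sum_congr rfl (fun m _ => hper m)
          _ = ∑ u : Matrix (Fin n) (Fin n) F, Complex.normSq (FT ψ 𝒜 u) := hre
          _ = ((q:ℝ))^(n*n) * (𝒜.card : ℝ) := by rw [hqdef]; exact parseval ψ hψ 𝒜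
      rw [Finset.sum_congr rfl h3, Finset.sum_const, nsmul_eq_mul]
    exact h1.trans_eq h2
  set Mx : ℝ := ((q:ℝ))^(n*n) * ((𝒜.card : ℝ) * ((q:ℝ))^((n-1)*n)) with hMxdef
  have herr : ∑ m ∈ (univ : Finset (Matrix (Fin n) (Fin n) F)).erase 0, Complex.normSq (G m)
      ≤ Mx * ((A'.card : ℝ) * (((q:ℝ))^(n*n) * (𝒜.card : ℝ))) := by
    have h1 : ∀ m ∈ (univ : Finset (Matrix (Fin n) (Fin n) F)).erase 0,
        Complex.normSq (G m) ≤ Mx * Pm m := by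
      intro m hm
      have hm0 : m ≠ 0 := Finset.ne_of_mem_erase hm
      calc Complex.normSq (G m) ≤ (Pm m)^2 := hGP m
        _ = Pm m * Pm m := sq (Pm m)
        _ ≤ Mx * Pm m := mul_le_mul_of_nonneg_right (hMx m hm0) (hPm0 m)
    calc ∑ m ∈ (univ : Finset (Matrix (Fin n) (Fin n) F)).erase 0, Complex.normSq (G m)
        ≤ ∑ m ∈ (univ : Finset (Matrix (Fin n) (Fin n) F)).erase 0, Mx * Pm m :=
          Finset.sum_le_sum h1
      _ = Mx * ∑ m ∈ (univ : Finset (Matrix (Fin n) (Fin n) F)).erase 0, Pm m :=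
          (Finset.mul_sum _ _ _).symm
      _ ≤ Mx * ((A'.card : ℝ) * (((q:ℝ))^(n*n) * (𝒜.card : ℝ))) := by
          refine mul_le_mul_of_nonneg_left hPsum ?_
          rw [hMxdef]
          positivity
  have hsplitsum : ((q:ℝ))^(n*n) * (Ecnt:ℝ)
      ≤ ((T.card:ℝ))^2 + Mx * ((A'.card : ℝ) * (((q:ℝ))^(n*n) * (𝒜.card : ℝ))) := by
    rw [← keyR]
    rw [← Finset.add_sum_erase univ (fun m => Complex.normSq (G m)) (mem_univ 0)]
    exact add_le_add (le_of_eq hG0) herr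
  -- numerics
  clear hGP hMx hPsum herr hG0 hGdecomp keyR keyC hsum1 hsum2 hPm0
  clear hPmdef hGdef
  clear Pm G
  have hsingR : ((𝒜.filter fun a => ¬ IsUnit a).card : ℝ) ≤ (n:ℝ) * ((q:ℝ))^(n*n-1) := by
    have h1 : (𝒜.filter fun a => ¬ IsUnit a).card ≤ n * q^(n*n-1) := by
      refine le_trans (Finset.card_le_card
        (Finset.filter_subset_filter _ (Finset.subset_univ 𝒜))) ?_
      exact card_nonunit_le (by omega)
    exact_mod_cast h1
  have hcards : (A'.card : ℝ) + ((𝒜.filter fun a => ¬ IsUnit a).card : ℝ) = (𝒜.card:ℝ) := by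
    have := Finset.card_filter_add_card_filter_not
      (s := 𝒜) (p := (IsUnit : Matrix (Fin n) (Fin n) F → Prop))
    exact_mod_cast this
  have hTreal : (T.card : ℝ) = (A'.card:ℝ) * ((𝒜.card:ℝ) * (𝒜.card:ℝ)) := by
    rw [hTcard]; push_cast; ring
  have hp1 : (𝒜.card:ℝ) ≤ (A'.card:ℝ) + (n:ℝ) * ((q:ℝ))^(n*n-1) := by
    linarith only [hsingR, hcards]
  have hCS' : (((A'.card:ℝ)) * ((𝒜.card:ℝ) * (𝒜.card:ℝ)))^2 ≤ (S'.card:ℝ) * (Ecnt:ℝ) := by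
    rw [← hTreal]; exact hCS
  have hsplit' : ((q:ℝ))^(n*n) * (Ecnt:ℝ)
      ≤ (((A'.card:ℝ)) * ((𝒜.card:ℝ) * (𝒜.card:ℝ)))^2
        + (((q:ℝ))^(n*n) * ((𝒜.card:ℝ) * ((q:ℝ))^((n-1)*n)))
          * ((A'.card:ℝ) * (((q:ℝ))^(n*n) * (𝒜.card:ℝ))) := by
    rw [← hTreal]
    exact hsplitsum
  exact final_numeric hn hq1 (𝒜.card:ℝ) (A'.card:ℝ) (S'.card:ℝ) (Ecnt:ℝ) hA hp1
    (Nat.cast_nonneg _) (Nat.cast_nonneg _) (Nat.cast_nonneg _) hCS' hsplit'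

end MEX

/-- x(y+z) is a moderate expander over M_n(F_q) with exponent one. -/
theorem moderate_expander_x_mul_y_add_z_Mn (n : ℕ) (hn : 3 ≤ n) :
    ∃ c C : ℝ, 0 < c ∧ 0 < C ∧
      ∀ (F : Type) [Field F] [Fintype F],
        Odd (Fintype.card F) →
        ∀ A : Set (Matrix (Fin n) (Fin n) F),
          C * (Fintype.card F : ℝ) ^ ((n : ℝ) ^ 2 - 1) ≤ (A.ncard : ℝ) →
          c * (Fintype.card F : ℝ) ^ ((n : ℝ) ^ 2) ≤
            ({x | ∃ a₁ ∈ A, ∃ a₂ ∈ A, ∃ a₃ ∈ A, x = a₁ * (a₂ + a₃)}.ncard : ℝ) := by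
  have hn3 : (3:ℝ) ≤ (n:ℝ) := by exact_mod_cast hn
  refine ⟨1/2, 2*n, by norm_num, by linarith, ?_⟩
  intro F _ _ _hodd A hA
  letI : DecidableEq F := Classical.decEq F
  have hnn1 : 1 ≤ n*n := by nlinarith
  have hcast1 : (((n*n - 1 : ℕ)) : ℝ) = (n:ℝ)^2 - 1 := by
    push_cast [Nat.cast_sub hnn1]
    ring
  have hcast2 : (((n*n : ℕ)) : ℝ) = (n:ℝ)^2 := by
    push_cast
    ring
  have he1 : (Fintype.card F : ℝ) ^ ((n : ℝ) ^ 2 - 1)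
      = (Fintype.card F : ℝ) ^ (n*n-1 : ℕ) := by
    rw [← hcast1, Real.rpow_natCast]
  have he2 : (Fintype.card F : ℝ) ^ ((n : ℝ) ^ 2)
      = (Fintype.card F : ℝ) ^ (n*n : ℕ) := by
    rw [← hcast2, Real.rpow_natCast]
  rw [he1] at hA
  rw [he2]
  set 𝒜 : Finset (Matrix (Fin n) (Fin n) F) := A.toFinite.toFinset with h𝒜
  have hAcard : (A.ncard : ℕ) = 𝒜.card := Set.ncard_eq_toFinset_card A A.toFinite
  have hA2 : (2 * n : ℝ) * (Fintype.card F : ℝ) ^ (n * n - 1) ≤ (𝒜.card : ℝ) := by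
    rw [← hAcard]
    exact hA
  have hmain := MEX.main_bound (F := F) hn 𝒜 hA2
  have hfin : ({x | ∃ a₁ ∈ A, ∃ a₂ ∈ A, ∃ a₃ ∈ A, x = a₁ * (a₂ + a₃)}
      : Set (Matrix (Fin n) (Fin n) F)).Finite := Set.toFinite _
  have hsub : (((𝒜.filter (IsUnit : Matrix (Fin n) (Fin n) F → Prop)) ×ˢ 𝒜 ×ˢ 𝒜).image
      (fun t : Matrix (Fin n) (Fin n) F × Matrix (Fin n) (Fin n) F × Matrix (Fin n) (Fin n) F
        => t.1 * (t.2.1 + t.2.2))) ⊆ hfin.toFinset := by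
    intro x hx
    rw [Finset.mem_image] at hx
    obtain ⟨t, ht, rfl⟩ := hx
    rw [Finset.mem_product] at ht
    obtain ⟨h1, h2⟩ := ht
    rw [Finset.mem_product] at h2
    rw [Set.Finite.mem_toFinset]
    refine ⟨t.1, ?_, t.2.1, ?_, t.2.2, ?_, rfl⟩
    · exact (Set.Finite.mem_toFinset _).mp (Finset.mem_of_mem_filter _ h1)
    · exact (Set.Finite.mem_toFinset _).mp h2.1
    · exact (Set.Finite.mem_toFinset _).mp h2.2
  have hcard2 : ((((𝒜.filter (IsUnit : Matrix (Fin n) (Fin n) F → Prop)) ×ˢ 𝒜 ×ˢ 𝒜).image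
      (fun t : Matrix (Fin n) (Fin n) F × Matrix (Fin n) (Fin n) F × Matrix (Fin n) (Fin n) F
        => t.1 * (t.2.1 + t.2.2))).card : ℝ)
      ≤ (({x | ∃ a₁ ∈ A, ∃ a₂ ∈ A, ∃ a₃ ∈ A, x = a₁ * (a₂ + a₃)}
          : Set (Matrix (Fin n) (Fin n) F)).ncard : ℝ) := by
    rw [Set.ncard_eq_toFinset_card _ hfin]
    exact_mod_cast Finset.card_le_card hsub
  linarith [hmain, hcard2]

end
end

section
/- There are constants c, C > 0 depending only on n such that the following holds. Let n ≥ 1, let q be an odd prime power, and let A, B, C ⊆ M_n(𝔽_q) with |A||B||C| ≥ C · q^{3n²−1}. Then |{a + bc : a ∈ A, b ∈ B, c ∈ C}| ≥ c · q^{n²}. -/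
/-!
Let `R` be a finite algebra over `𝔽_q` with `N = |R|` (for matrices, `N = q^{n²}`), and let `E`
count the solutions of `a + b s = a' + b' s'` in `A × B × S`. Cauchy–Schwarz over the fibres of
`(a, b, s) ↦ a + b s` gives `(|A||B||S|)² ≤ |A + B S| · E`.

Expanding in additive characters, `N E = ∑_χ |∑_a χ(a)|² |∑_{b,s} χ(b s)|²`. The trivial
character contributes `(|A||B||S|)²`. For `χ ≠ 0`, Cauchy–Schwarz in `b` and orthogonality of
the characters `b ↦ χ(b s)` bound `|∑_{b,s} χ(b s)|²` by `N |B|` times the number of pairs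
`s, s' ∈ S` with `s - s'` in the largest left ideal contained in `ker χ`. That ideal is a proper
`𝔽_q`-subspace, hence has at most `N / q` elements. Summing with Parseval for `A`,
`q N E ≤ q (|A||B||S|)² + N³ |A||B||S|`, so `N E ≤ 2 (|A||B||S|)²` as soon as
`N³ ≤ q |A||B||S|`, and then `|A + B S| ≥ N / 2`.
-/

open Finset
open scoped Pointwise

namespace Finset

theorem sq_card_le_card_mul_card_filter_eq {α β : Type*} [DecidableEq β] {T : Finset α}
    {U : Finset β} {f : α → β} (hf : ∀ p ∈ T, f p ∈ U) :
    #T ^ 2 ≤ #U * #{pq ∈ T ×ˢ T | f pq.1 = f pq.2} := by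
  have hT : #T = ∑ u ∈ U, #{p ∈ T | f p = u} := card_eq_sum_card_fiberwise hf
  have hE : #{pq ∈ T ×ˢ T | f pq.1 = f pq.2} = ∑ u ∈ U, #{p ∈ T | f p = u} ^ 2 := by
    rw [card_eq_sum_card_fiberwise (f := fun pq => f pq.1) (t := U)
      fun pq hpq => hf _ (mem_product.1 (mem_filter.1 hpq).1).1]
    refine sum_congr rfl fun u _ => ?_
    rw [sq, ← card_product, filter_filter]
    congr 1
    ext ⟨p, p'⟩
    simp only [mem_filter, mem_product]
    constructor
    · rintro ⟨⟨hp, hp'⟩, hpp', rfl⟩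
      exact ⟨⟨hp, rfl⟩, hp', hpp'.symm⟩
    · rintro ⟨⟨hp, rfl⟩, hp', hpp'⟩
      exact ⟨⟨hp, hp'⟩, hpp'.symm, rfl⟩
  rw [hT, hE]
  exact sq_sum_le_card_mul_sum_sq

theorem card_filter_sub_mem_le {G : Type*} [AddGroup G] [Finite G] (K : AddSubgroup G)
    [DecidablePred (· ∈ K)] (S : Finset G) :
    #{pq ∈ S ×ˢ S | pq.1 - pq.2 ∈ K} ≤ Nat.card K * #S := by
  have hfiber : ∀ s' ∈ S, #{s ∈ S | s - s' ∈ K} ≤ Nat.card K := fun s' _ => by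
    rw [← Nat.card_eq_finsetCard]
    refine Nat.card_le_card_of_injective (fun s => ⟨s.1 - s', (mem_filter.1 s.2).2⟩) ?_
    intro s t hst
    exact Subtype.ext (sub_left_inj.1 (congrArg Subtype.val hst))
  calc #{pq ∈ S ×ˢ S | pq.1 - pq.2 ∈ K} = ∑ s' ∈ S, #{s ∈ S | s - s' ∈ K} := by
        simp only [card_filter, sum_product_right]
    _ ≤ #S • Nat.card K := sum_le_card_nsmul _ _ _ hfiber
    _ = Nat.card K * #S := by rw [smul_eq_mul, mul_comm]

section AddMul

variable {R : Type*} [DecidableEq R] [Add R] [Mul R]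

def addMulEnergy (A B S : Finset R) : ℕ :=
  #{pq ∈ (A ×ˢ B ×ˢ S) ×ˢ (A ×ˢ B ×ˢ S) |
    pq.1.1 + pq.1.2.1 * pq.1.2.2 = pq.2.1 + pq.2.2.1 * pq.2.2.2}

theorem le_card_add_mul_mul_addMulEnergy (A B S : Finset R) :
    (#A * #B * #S) ^ 2 ≤ #(A + B * S) * addMulEnergy A B S := by
  rw [mul_assoc, ← card_product, ← card_product]
  exact sq_card_le_card_mul_card_filter_eq (f := fun p : R × R × R => p.1 + p.2.1 * p.2.2)
    fun p hp => by
      obtain ⟨ha, hb, hs⟩ := mem_product.1 hp |>.imp_right mem_product.1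
      exact add_mem_add ha (mul_mem_mul hb hs)

end AddMul

end Finset

theorem Set.setOf_exists_add_mul_eq {R : Type*} [Add R] [Mul R] (A B S : Set R) :
    {x | ∃ a ∈ A, ∃ b ∈ B, ∃ s ∈ S, x = a + b * s} = A + B * S := by
  ext x
  simp only [Set.mem_ofPred_eq, Set.mem_add, Set.mem_mul]
  aesop

theorem Submodule.card_mul_natCard_le_of_ne_top {F V : Type*} [Field F] [Fintype F]
    [AddCommGroup V] [Module F V] [Finite V] {K : Submodule F V} (hK : K ≠ ⊤) :
    Fintype.card F * Nat.card K ≤ Nat.card V := by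
  have : Module.Finite F V := Module.Finite.of_finite
  rw [Module.natCard_eq_pow_finrank (K := F) (V := K),
    Module.natCard_eq_pow_finrank (K := F) (V := V), Nat.card_eq_fintype_card, ← pow_succ']
  exact Nat.pow_le_pow_right Fintype.card_pos (Submodule.finrank_lt hK)

namespace AddChar

theorem sum_sq_norm_sum_eq_card_mul_card_filter {G α : Type*} [AddCommGroup G] [Fintype G]
    [DecidableEq (AddChar G ℂ)] (T : Finset α) (ψ : α → AddChar G ℂ) :
    ∑ x, ‖∑ p ∈ T, ψ p x‖ ^ 2 = Fintype.card G * #{pq ∈ T ×ˢ T | ψ pq.1 = ψ pq.2} := by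
  apply Complex.ofReal_injective
  push_cast
  calc ∑ x, (‖∑ p ∈ T, ψ p x‖ : ℂ) ^ 2
      = ∑ x, ∑ pq ∈ T ×ˢ T, (ψ pq.1 - ψ pq.2) x := by
        refine sum_congr rfl fun x _ => ?_
        rw [← Complex.mul_conj', map_sum, sum_mul_sum, sum_product]
        simp only [sub_apply, map_neg_eq_conj]
    _ = ∑ pq ∈ T ×ˢ T, if ψ pq.1 = ψ pq.2 then (Fintype.card G : ℂ) else 0 := by
        rw [sum_comm]
        refine sum_congr rfl fun pq _ => ?_
        simp only [sum_eq_ite, sub_eq_zero]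
    _ = _ := by rw [sum_ite, sum_const_zero, add_zero, sum_const, nsmul_eq_mul, mul_comm]

variable {R : Type*} [Ring R]

def leftKer (χ : AddChar R ℂ) : Submodule R R where
  carrier := {d | ∀ b, χ (b * d) = 1}
  add_mem' {d d'} hd hd' b := by rw [mul_add, map_add_eq_mul, hd, hd', one_mul]
  zero_mem' b := by rw [mul_zero, map_zero_eq_one]
  smul_mem' r d hd b := by rw [smul_eq_mul, ← mul_assoc]; exact hd _

theorem mem_leftKer {χ : AddChar R ℂ} {d : R} : d ∈ χ.leftKer ↔ ∀ b, χ (b * d) = 1 := Iff.rfl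

theorem leftKer_ne_top {χ : AddChar R ℂ} (hχ : χ ≠ 0) : χ.leftKer ≠ ⊤ := fun h => hχ <| by
  ext b
  simpa using mem_leftKer.1 (h ▸ Submodule.mem_top : (1 : R) ∈ χ.leftKer) b

theorem compAddMonoidHom_mulRight_eq_iff {χ : AddChar R ℂ} {s s' : R} :
    χ.compAddMonoidHom (.mulRight s) = χ.compAddMonoidHom (.mulRight s') ↔
      s - s' ∈ χ.leftKer := by
  rw [← sub_eq_zero, eq_zero_iff]
  simp only [sub_apply, compAddMonoidHom_apply, AddMonoidHom.coe_mulRight, ← map_add_eq_mul,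
    neg_mul, ← sub_eq_add_neg, ← mul_sub, mem_leftKer]

end AddChar

section FiniteAlgebra

variable {F R : Type*} [Field F] [Fintype F] [Ring R] [Fintype R] [Algebra F R]

theorem AddChar.card_mul_natCard_leftKer_le {χ : AddChar R ℂ} (hχ : χ ≠ 0) :
    Fintype.card F * Nat.card χ.leftKer ≤ Fintype.card R := by
  rw [Fintype.card_eq_nat_card (α := R)]
  refine Submodule.card_mul_natCard_le_of_ne_top (K := χ.leftKer.restrictScalars F) ?_
  rw [Ne, Submodule.restrictScalars_eq_top_iff]
  exact AddChar.leftKer_ne_top hχ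

theorem AddChar.card_mul_sq_norm_sum_mul_le {χ : AddChar R ℂ} (hχ : χ ≠ 0) (B S : Finset R) :
    Fintype.card F * ‖∑ bs ∈ B ×ˢ S, χ (bs.1 * bs.2)‖ ^ 2 ≤
      (Fintype.card R : ℝ) ^ 2 * #B * #S := by
  classical
  set ψ : R → AddChar R ℂ := fun s => χ.compAddMonoidHom (.mulRight s)
  set K := χ.leftKer
  have hCS : ‖∑ bs ∈ B ×ˢ S, χ (bs.1 * bs.2)‖ ^ 2 ≤ #B * ∑ b, ‖∑ s ∈ S, ψ s b‖ ^ 2 :=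
    calc ‖∑ bs ∈ B ×ˢ S, χ (bs.1 * bs.2)‖ ^ 2 = ‖∑ b ∈ B, ∑ s ∈ S, ψ s b‖ ^ 2 := by
          rw [sum_product]; rfl
      _ ≤ (∑ b ∈ B, ‖∑ s ∈ S, ψ s b‖) ^ 2 := by gcongr; exact norm_sum_le _ _
      _ ≤ #B * ∑ b ∈ B, ‖∑ s ∈ S, ψ s b‖ ^ 2 := sq_sum_le_card_mul_sum_sq
      _ ≤ #B * ∑ b, ‖∑ s ∈ S, ψ s b‖ ^ 2 := by
          exact mul_le_mul_of_nonneg_left (sum_le_univ_sum_of_nonneg fun _ => sq_nonneg _)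
            (Nat.cast_nonneg _)
  have hcoll : (#{pq ∈ S ×ˢ S | ψ pq.1 = ψ pq.2} : ℝ) ≤ Nat.card K * #S := by
    simp only [ψ, AddChar.compAddMonoidHom_mulRight_eq_iff]
    exact_mod_cast card_filter_sub_mem_le K.toAddSubgroup S
  have hK : (Fintype.card F : ℝ) * Nat.card K ≤ Fintype.card R := by
    exact_mod_cast AddChar.card_mul_natCard_leftKer_le hχ
  rw [AddChar.sum_sq_norm_sum_eq_card_mul_card_filter] at hCS
  calc (Fintype.card F : ℝ) * ‖∑ bs ∈ B ×ˢ S, χ (bs.1 * bs.2)‖ ^ 2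
      ≤ Fintype.card F * (#B * (Fintype.card R * (Nat.card K * #S))) := by
          gcongr; refine hCS.trans ?_; gcongr
    _ = #B * Fintype.card R * (Fintype.card F * Nat.card K) * #S := by ring
    _ ≤ #B * Fintype.card R * Fintype.card R * #S := by gcongr
    _ = (Fintype.card R : ℝ) ^ 2 * #B * #S := by ring

theorem card_mul_addMulEnergy_le [DecidableEq R] (A B S : Finset R) :
    (Fintype.card F : ℝ) * (Fintype.card R * addMulEnergy A B S) ≤
      Fintype.card F * (#A * #B * #S) ^ 2 + (Fintype.card R : ℝ) ^ 3 * (#A * #B * #S) := by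
  classical
  set T := A ×ˢ B ×ˢ S
  set q : ℝ := (Fintype.card F : ℝ)
  set N : ℝ := (Fintype.card R : ℝ)
  set f : R × R × R → R := fun p => p.1 + p.2.1 * p.2.2
  have hT : (#T : ℝ) = #A * #B * #S := by simp only [T, card_product]; push_cast; ring
  have hfactor : ∀ χ : AddChar R ℂ, ∑ p ∈ T, χ (f p) =
      (∑ a ∈ A, χ a) * ∑ bs ∈ B ×ˢ S, χ (bs.1 * bs.2) := fun χ => by
    rw [sum_mul_sum, sum_product]
    simp only [f, AddChar.map_add_eq_mul]
  have hParseval_T : ∑ χ : AddChar R ℂ, ‖∑ p ∈ T, χ (f p)‖ ^ 2 = N * addMulEnergy A B S := by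
    have := AddChar.sum_sq_norm_sum_eq_card_mul_card_filter T fun p => AddChar.doubleDualEmb (f p)
    simp only [AddChar.doubleDualEmb_apply, AddChar.doubleDualEmb_inj, AddChar.card_eq] at this
    rw [this]
    rfl
  have hParseval_A : ∑ χ : AddChar R ℂ, ‖∑ a ∈ A, χ a‖ ^ 2 = N * #A := by
    simpa only [AddChar.doubleDualEmb_apply, AddChar.doubleDualEmb_inj, AddChar.card_eq,
      ← diag_eq_filter, diag_card] using
      AddChar.sum_sq_norm_sum_eq_card_mul_card_filter A AddChar.doubleDualEmb
  have hzero : ‖∑ p ∈ T, (0 : AddChar R ℂ) (f p)‖ ^ 2 = #T ^ 2 := by simp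
  have hnonzero : ∀ χ ∈ univ.erase (0 : AddChar R ℂ),
      q * ‖∑ p ∈ T, χ (f p)‖ ^ 2 ≤ ‖∑ a ∈ A, χ a‖ ^ 2 * (N ^ 2 * #B * #S) := fun χ hχ => by
    rw [hfactor, norm_mul, mul_pow, mul_left_comm]
    exact mul_le_mul_of_nonneg_left
      (AddChar.card_mul_sq_norm_sum_mul_le (F := F) (ne_of_mem_erase hχ) B S) (sq_nonneg _)
  calc q * (N * addMulEnergy A B S)
      = q * #T ^ 2 + ∑ χ ∈ univ.erase (0 : AddChar R ℂ), q * ‖∑ p ∈ T, χ (f p)‖ ^ 2 := by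
        rw [← hParseval_T, ← add_sum_erase _ _ (mem_univ 0), hzero, mul_add, mul_sum]
    _ ≤ q * #T ^ 2 + ∑ χ : AddChar R ℂ, ‖∑ a ∈ A, χ a‖ ^ 2 * (N ^ 2 * #B * #S) := by
        gcongr
        exact (sum_le_sum hnonzero).trans (sum_le_univ_sum_of_nonneg fun _ => by positivity)
    _ = q * (#A * #B * #S) ^ 2 + N ^ 3 * (#A * #B * #S) := by
        rw [← sum_mul, hParseval_A, hT]; ring

theorem card_le_two_mul_card_add_mul [DecidableEq R] (A B S : Finset R)
    (h : Fintype.card R ^ 3 ≤ Fintype.card F * (#A * #B * #S)) :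
    Fintype.card R ≤ 2 * #(A + B * S) := by
  suffices (Fintype.card R : ℝ) ≤ 2 * #(A + B * S) by exact_mod_cast this
  have hcube : (Fintype.card R : ℝ) ^ 3 ≤ Fintype.card F * (#A * #B * #S) := by exact_mod_cast h
  have hCS : ((#A : ℝ) * #B * #S) ^ 2 ≤ #(A + B * S) * addMulEnergy A B S := by
    exact_mod_cast le_card_add_mul_mul_addMulEnergy A B S
  have hEnergy := card_mul_addMulEnergy_le (F := F) A B S
  set q : ℝ := (Fintype.card F : ℝ)
  set N : ℝ := (Fintype.card R : ℝ)
  set P : ℝ := (#A : ℝ) * #B * #S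
  set E : ℝ := (addMulEnergy A B S : ℝ)
  set X : ℝ := (#(A + B * S) : ℝ)
  have hq : 0 < q := by positivity
  have hP : 0 < P := pos_of_mul_pos_right (hcube.trans_lt' (by positivity)) hq.le
  have hNE : N * E ≤ 2 * P ^ 2 := by
    refine le_of_mul_le_mul_left ?_ hq
    nlinarith
  have : N * P ^ 2 ≤ 2 * X * P ^ 2 := by
    nlinarith [mul_le_mul_of_nonneg_left hCS (by positivity : 0 ≤ N),
      mul_le_mul_of_nonneg_left hNE (by positivity : 0 ≤ X)]
  exact le_of_mul_le_mul_right this (by positivity)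

end FiniteAlgebra

theorem Matrix.card_fin_eq_rpow (F : Type*) [Field F] [Fintype F] (n : ℕ) :
    (Fintype.card (Matrix (Fin n) (Fin n) F) : ℝ) = (Fintype.card F : ℝ) ^ ((n : ℝ) ^ 2) := by
  rw [show (n : ℝ) ^ 2 = ((n * n : ℕ) : ℝ) by push_cast; ring, Real.rpow_natCast]
  simp [Module.card_eq_pow_finrank (K := F) (V := Matrix (Fin n) (Fin n) F),
    Module.finrank_matrix]

theorem expander_x_add_yz_general_general (n : ℕ) :
    ∃ c C : ℝ, 0 < c ∧ 0 < C ∧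
      ∀ (F : Type) [Field F] [Fintype F],
        Odd (Fintype.card F) →
        ∀ (A B S : Set (Matrix (Fin n) (Fin n) F)),
          C * (Fintype.card F : ℝ) ^ (3 * (n : ℝ) ^ 2 - 1) ≤
            (A.ncard : ℝ) * (B.ncard : ℝ) * (S.ncard : ℝ) →
          c * (Fintype.card F : ℝ) ^ ((n : ℝ) ^ 2) ≤
            ({x | ∃ a ∈ A, ∃ b ∈ B, ∃ s ∈ S, x = a + b * s}.ncard : ℝ) := by
  refine ⟨1 / 2, 1, by norm_num, one_pos, fun F _ _ _ A B S hABS => ?_⟩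
  classical
  obtain ⟨A, rfl⟩ := A.toFinite.exists_finset_coe
  obtain ⟨B, rfl⟩ := B.toFinite.exists_finset_coe
  obtain ⟨S, rfl⟩ := S.toFinite.exists_finset_coe
  set q : ℝ := (Fintype.card F : ℝ)
  have hq : 0 < q := by positivity
  have hN := Matrix.card_fin_eq_rpow F n
  have hcube : Fintype.card (Matrix (Fin n) (Fin n) F) ^ 3 ≤ Fintype.card F * (#A * #B * #S) := by
    rw [← Nat.cast_le (α := ℝ)]
    simp only [Set.ncard_coe_finset, one_mul, Real.rpow_sub hq, Real.rpow_one,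
      div_le_iff₀ hq] at hABS
    push_cast
    rw [hN, ← Real.rpow_natCast, ← Real.rpow_mul hq.le, Nat.cast_ofNat, mul_comm]
    linarith
  have hmain : (Fintype.card (Matrix (Fin n) (Fin n) F) : ℝ) ≤ 2 * #(A + B * S) := by
    exact_mod_cast card_le_two_mul_card_add_mul A B S hcube
  rw [Set.setOf_exists_add_mul_eq, ← coe_mul, ← coe_add, Set.ncard_coe_finset, ← hN]
  linarith

/-- Theorem: x + yz for arbitrary sets A, B, C ⊆ M_n(F_q) with |A||B||C| ≫ q^{3n²-1}. -/
theorem expander_x_add_yz_general (n : ℕ) (hn : 1 ≤ n) :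
    ∃ c C : ℝ, 0 < c ∧ 0 < C ∧
      ∀ (F : Type) [Field F] [Fintype F],
        Odd (Fintype.card F) →
        ∀ (A B S : Set (Matrix (Fin n) (Fin n) F)),
          C * (Fintype.card F : ℝ) ^ (3 * (n : ℝ) ^ 2 - 1) ≤
            (A.ncard : ℝ) * (B.ncard : ℝ) * (S.ncard : ℝ) →
          c * (Fintype.card F : ℝ) ^ ((n : ℝ) ^ 2) ≤
            ({x | ∃ a ∈ A, ∃ b ∈ B, ∃ s ∈ S, x = a + b * s}.ncard : ℝ) :=
  expander_x_add_yz_general_general n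
end

section
/- There is a constant c > 0 depending only on n such that the following holds. Let q be an odd prime power, n ≥ 1, and let M be the adjacency matrix (over ℂ) of the sum-product digraph over M_n(𝔽_q). Then every eigenvalue λ ∈ ℂ of M with |λ| ≠ q^{n²} satisfies |λ| ≤ c · q^{n² − 1/2}. -/
/-!
Let `R` be a finite `𝔽_q`-algebra (here `M_n(𝔽_q)`). If `v` is an eigenvector for `λ`, then
`λ v(A, C) = ∑_B v(B, AB - C)`, so `λ² v(A, C)` is the sum of `v(A', BA' - AB + C)` over all
`B, A'`. Fourier transforming `v` in its second coordinate against an additive character `χ` of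
`R` turns this into `λ² v̂(χ, A) = |R| ∑ v̂(χ, A')`, the sum running over those `A'` for which
`B ↦ χ(AB - BA')` is trivial. Some `v̂(χ, A)` is nonzero. For trivial `χ` every `A'` qualifies
and then `λ² = |R|²`. Otherwise the admissible `A'` lie in a coset of
`{D | χ(BD) = 1 for all B}`, a proper `𝔽_q`-subspace of `R`, so there are at most `|R| / q` of
them; comparing both sides at an `A` where `|v̂(χ, A)|` is maximal gives `q |λ|² ≤ |R|²`, i.e.
the bound with `c = 1`.
-/

open Finset Matrix

lemma Matrix.card_eq_pow (m n α : Type*) [Fintype m] [DecidableEq m] [Fintype n] [DecidableEq n]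
    [Fintype α] :
    Fintype.card (Matrix m n α) = Fintype.card α ^ (Fintype.card m * Fintype.card n) := by
  simp only [Fintype.card_eq_nat_card]
  change Nat.card (m → n → α) = _
  rw [Nat.card_fun, Nat.card_fun, ← pow_mul, mul_comm]

lemma Real.le_rpow_sub_half_of_mul_sq_le {x q m : ℝ} (hx : 0 ≤ x) (hq : 0 < q)
    (h : q * x ^ 2 ≤ (q ^ m) ^ 2) : x ≤ q ^ (m - 1 / 2) := by
  have hsq : (q ^ m) ^ 2 = q * (q ^ (m - 1 / 2)) ^ 2 := by
    rw [← Real.rpow_natCast, ← Real.rpow_natCast, ← Real.rpow_mul hq.le, ← Real.rpow_mul hq.le,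
      mul_comm q, ← Real.rpow_add_one hq.ne']
    ring_nf
  rw [hsq] at h
  exact (pow_le_pow_iff_left₀ hx (by positivity) two_ne_zero).mp (le_of_mul_le_mul_left h hq)

lemma Submodule.natCard_mul_natCard_le_natCard_of_ne_top {K V : Type*} [Field K] [Finite K]
    [AddCommGroup V] [Module K V] [Finite V] {W : Submodule K V} (hW : W ≠ ⊤) :
    Nat.card K * Nat.card W ≤ Nat.card V := by
  rw [Module.natCard_eq_pow_finrank (K := K) (V := W),
    Module.natCard_eq_pow_finrank (K := K) (V := V), ← pow_succ']
  exact Nat.pow_le_pow_right Nat.card_pos (Submodule.finrank_lt hW)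

section

variable {α : Type*} [Fintype α] {g : α → ℂ} {μ c : ℂ}

lemma eq_mul_card_of_forall_mul_eq_mul_sum (hg : g ≠ 0) (hμ : μ ≠ 0)
    (h : ∀ a, μ * g a = c * ∑ b, g b) : μ = c * Fintype.card α := by
  have hsum : ∑ b, g b ≠ 0 := by
    intro h0
    obtain ⟨a, ha⟩ := Function.ne_iff.mp hg
    exact ha (by simpa [h0, hμ] using h a)
  apply mul_right_cancel₀ hsum
  calc μ * ∑ b, g b = ∑ a, c * ∑ b, g b :=
        (mul_sum ..).trans (sum_congr rfl fun a _ => h a)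
    _ = c * Fintype.card α * ∑ b, g b := by rw [sum_const, card_univ, nsmul_eq_mul]; ring

lemma norm_le_of_forall_mul_eq_mul_sum (hg : g ≠ 0) {T : α → Finset α} {N : ℕ}
    (hT : ∀ a, #(T a) ≤ N) (h : ∀ a, μ * g a = c * ∑ b ∈ T a, g b) : ‖μ‖ ≤ ‖c‖ * N := by
  obtain ⟨a₁, ha₁⟩ := Function.ne_iff.mp hg
  obtain ⟨a, -, hmax⟩ := exists_max_image univ (fun a => ‖g a‖) ⟨a₁, mem_univ _⟩
  have hpos : 0 < ‖g a‖ := (norm_pos_iff.mpr ha₁).trans_le (hmax a₁ (mem_univ _))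
  refine le_of_mul_le_mul_right ?_ hpos
  calc ‖μ‖ * ‖g a‖ = ‖c‖ * ‖∑ b ∈ T a, g b‖ := by rw [← norm_mul, ← norm_mul, h]
    _ ≤ ‖c‖ * (#(T a) * ‖g a‖) := by
        gcongr
        exact (norm_sum_le _ _).trans <|
          (sum_le_card_nsmul _ _ _ fun b _ => hmax b (mem_univ _)).trans_eq (nsmul_eq_mul ..)
    _ ≤ ‖c‖ * N * ‖g a‖ := by
        rw [mul_assoc]
        gcongr
        exact_mod_cast hT a

end

namespace SumProductDigraph

variable {R : Type*} [Ring R]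

variable (R) in
def adjMatrix [DecidableEq R] : Matrix (R × R) (R × R) ℂ :=
  Matrix.of fun p q => if p.1 * q.1 = p.2 + q.2 then 1 else 0

def twistChar (χ : AddChar R ℂ) (A A' : R) : AddChar R ℂ :=
  χ.compAddMonoidHom (AddMonoidHom.mulLeft A - AddMonoidHom.mulRight A')

lemma twistChar_apply (χ : AddChar R ℂ) (A A' B : R) :
    twistChar χ A A' B = χ (A * B - B * A') := rfl

variable (F : Type*) [Field F] [Algebra F R]

def leftKer (χ : AddChar R ℂ) : Submodule F R where
  carrier := {D | ∀ B, χ (B * D) = 1}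
  add_mem' hD hD' B := by rw [mul_add, AddChar.map_add_eq_mul, hD B, hD' B, one_mul]
  zero_mem' B := by simp
  smul_mem' c D hD B := by rw [mul_smul_comm, ← smul_mul_assoc]; exact hD _

lemma leftKer_ne_top {χ : AddChar R ℂ} (hχ : χ ≠ 0) : leftKer F χ ≠ ⊤ := by
  intro h
  have h1 : (1 : R) ∈ leftKer F χ := h ▸ Submodule.mem_top
  refine hχ (AddChar.ext _ _ fun B => ?_)
  simpa using h1 B

variable [Fintype R]

lemma card_filter_twistChar_eq_zero_le (χ : AddChar R ℂ) (A : R) :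
    #{A' | twistChar χ A A' = 0} ≤ Nat.card (leftKer F χ) := by
  rcases (univ.filter fun A' => twistChar χ A A' = 0).eq_empty_or_nonempty with hT | ⟨A₀, hA₀⟩
  · simp [hT]
  rw [← Nat.card_eq_finsetCard]
  refine Nat.card_le_card_of_injective (fun A' => ⟨A' - A₀, fun B => ?_⟩) fun A' A'' h => ?_
  · have h1 := DFunLike.congr_fun (mem_filter.mp A'.2).2 B
    have h0 := DFunLike.congr_fun (mem_filter.mp hA₀).2 B
    simp only [twistChar_apply, AddChar.zero_apply] at h0 h1
    rw [mul_sub, ← sub_sub_sub_cancel_left _ _ (A * B), AddChar.map_sub_eq_div, h0, h1, div_one]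
  · exact Subtype.ext (sub_left_inj.mp (congrArg Subtype.val h))

def fourierSnd (v : R × R → ℂ) (χ : AddChar R ℂ) (A : R) : ℂ := ∑ C, χ C * v (A, C)

variable [DecidableEq R]

lemma sum_mul_fourierSnd (v : R × R → ℂ) (A C : R) :
    ∑ χ : AddChar R ℂ, χ (-C) * fourierSnd v χ A = Fintype.card R * v (A, C) := by
  simp only [fourierSnd, mul_sum, ← mul_assoc, ← AddChar.map_add_eq_mul]
  rw [sum_comm]
  simp only [← sum_mul, AddChar.sum_apply_eq_ite, neg_add_eq_zero, ite_mul, zero_mul,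
    sum_ite_eq, mem_univ, if_true]

lemma exists_fourierSnd_ne_zero {v : R × R → ℂ} (hv : v ≠ 0) : ∃ χ A, fourierSnd v χ A ≠ 0 := by
  obtain ⟨⟨A, C⟩, hAC⟩ := Function.ne_iff.mp hv
  by_contra! h
  have := sum_mul_fourierSnd v A C
  simp only [h, mul_zero, sum_const_zero, zero_eq_mul, Nat.cast_eq_zero,
    Fintype.card_ne_zero, false_or] at this
  exact hAC this

lemma adjMatrix_mulVec_apply (v : R × R → ℂ) (A C : R) :
    (adjMatrix R *ᵥ v) (A, C) = ∑ B, v (B, A * B - C) := by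
  simp only [adjMatrix, mulVec, dotProduct, of_apply, Fintype.sum_prod_type]
  refine sum_congr rfl fun B _ => ?_
  simp only [boole_mul, eq_comm (a := A * B), ← eq_sub_iff_add_eq', sum_ite_eq', mem_univ,
    if_true]

variable {v : R × R → ℂ} {lam : ℂ}

lemma sq_mul_apply_of_mulVec_eq_smul (hv : adjMatrix R *ᵥ v = lam • v) (A C : R) :
    lam ^ 2 * v (A, C) = ∑ B, ∑ A', v (A', B * A' - (A * B - C)) := by
  have eigen (A C : R) : lam * v (A, C) = ∑ B, v (B, A * B - C) := by
    rw [← adjMatrix_mulVec_apply, hv, Pi.smul_apply, smul_eq_mul]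
  simp only [sq, mul_assoc, eigen, mul_sum]

lemma sq_mul_fourierSnd (hv : adjMatrix R *ᵥ v = lam • v) (χ : AddChar R ℂ) (A : R) :
    lam ^ 2 * fourierSnd v χ A =
      Fintype.card R * ∑ A' with twistChar χ A A' = 0, fourierSnd v χ A' := by
  have shift (B A' : R) :
      ∑ C, χ C * v (A', B * A' - (A * B - C)) = twistChar χ A A' B * fourierSnd v χ A' := by
    rw [fourierSnd, mul_sum]
    refine Fintype.sum_equiv (Equiv.subRight (A * B - B * A')) _ _ fun C => ?_
    rw [twistChar_apply, ← mul_assoc, ← AddChar.map_add_eq_mul, Equiv.subRight_apply,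
      add_sub_cancel]
    congr 3
    abel
  calc lam ^ 2 * fourierSnd v χ A
      = ∑ C, ∑ B, ∑ A', χ C * v (A', B * A' - (A * B - C)) := by
        simp only [fourierSnd, mul_sum, mul_left_comm _ (χ _), sq_mul_apply_of_mulVec_eq_smul hv]
    _ = ∑ B, ∑ A', ∑ C, χ C * v (A', B * A' - (A * B - C)) := by
        rw [sum_comm]
        exact sum_congr rfl fun B _ => sum_comm
    _ = ∑ A', (∑ B, twistChar χ A A' B) * fourierSnd v χ A' := by
        simp only [shift, sum_mul]
        exact sum_comm
    _ = _ := by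
        simp only [AddChar.sum_eq_ite, ite_mul, zero_mul, sum_ite, sum_const_zero, add_zero,
          mul_sum]

lemma norm_eq_card_of_fourierSnd_zero_ne_zero (hv : adjMatrix R *ᵥ v = lam • v)
    (hg : fourierSnd v 0 ≠ 0) (hlam : lam ≠ 0) : ‖lam‖ = Fintype.card R := by
  have hsum (A : R) : lam ^ 2 * fourierSnd v 0 A = Fintype.card R * ∑ A', fourierSnd v 0 A' := by
    have htriv (A' : R) : twistChar 0 A A' = 0 := by ext; simp [twistChar_apply]
    simpa [htriv] using sq_mul_fourierSnd hv 0 A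
  have hlam2 := eq_mul_card_of_forall_mul_eq_mul_sum hg (pow_ne_zero 2 hlam) hsum
  refine (pow_left_inj₀ (norm_nonneg _) (Nat.cast_nonneg _) two_ne_zero).mp ?_
  rw [← norm_pow, hlam2, ← sq, norm_pow, Complex.norm_natCast]

lemma card_mul_norm_sq_le_of_fourierSnd_ne_zero [Fintype F] (hv : adjMatrix R *ᵥ v = lam • v)
    {χ : AddChar R ℂ} (hχ : χ ≠ 0) (hg : fourierSnd v χ ≠ 0) :
    Fintype.card F * ‖lam‖ ^ 2 ≤ (Fintype.card R : ℝ) ^ 2 := by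
  have hbound := norm_le_of_forall_mul_eq_mul_sum hg
    (card_filter_twistChar_eq_zero_le F χ) (sq_mul_fourierSnd hv χ)
  have hK := Submodule.natCard_mul_natCard_le_natCard_of_ne_top (leftKer_ne_top F hχ)
  rw [norm_pow, Complex.norm_natCast] at hbound
  rw [Nat.card_eq_fintype_card (α := F), Nat.card_eq_fintype_card (α := R)] at hK
  calc Fintype.card F * ‖lam‖ ^ 2
      ≤ Fintype.card F * (Fintype.card R * Nat.card (leftKer F χ)) := by gcongr
    _ = Fintype.card R * (Fintype.card F * Nat.card (leftKer F χ) : ℕ) := by push_cast; ring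
    _ ≤ Fintype.card R * Fintype.card R := by gcongr
    _ = (Fintype.card R : ℝ) ^ 2 := (sq _).symm

theorem card_mul_norm_sq_le_of_mulVec_eq_smul [Fintype F]
    (hv0 : v ≠ 0) (hv : adjMatrix R *ᵥ v = lam • v) (hlam : ‖lam‖ ≠ Fintype.card R) :
    Fintype.card F * ‖lam‖ ^ 2 ≤ (Fintype.card R : ℝ) ^ 2 := by
  obtain ⟨χ, A, hA⟩ := exists_fourierSnd_ne_zero hv0
  have hg : fourierSnd v χ ≠ 0 := fun h => hA (congrFun h A)
  rcases eq_or_ne χ 0 with rfl | hχ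
  · rcases eq_or_ne lam 0 with rfl | hlam0
    · simp
    · exact absurd (norm_eq_card_of_fourierSnd_zero_ne_zero hv hg hlam0) hlam
  · exact card_mul_norm_sq_le_of_fourierSnd_ne_zero F hv hχ hg

end SumProductDigraph

theorem sum_product_digraph_eigenvalue_bound_general (n : ℕ) :
    ∃ c : ℝ, 0 < c ∧
      ∀ (F : Type) [Field F] [Fintype F] [DecidableEq F],
        Odd (Fintype.card F) →
        ∀ (lam : ℂ)
          (v : Matrix (Fin n) (Fin n) F × Matrix (Fin n) (Fin n) F → ℂ),
          v ≠ 0 →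
          (Matrix.of fun p q : Matrix (Fin n) (Fin n) F × Matrix (Fin n) (Fin n) F =>
              if p.1 * q.1 = p.2 + q.2 then (1 : ℂ) else 0).mulVec v = lam • v →
          ‖lam‖ ≠ (Fintype.card F : ℝ) ^ ((n : ℝ) ^ 2) →
          ‖lam‖ ≤ c * (Fintype.card F : ℝ) ^ ((n : ℝ) ^ 2 - 1 / 2) := by
  refine ⟨1, one_pos, fun F _ _ _ _ lam v hv0 hv hlam => ?_⟩
  have hcard : (Fintype.card (Matrix (Fin n) (Fin n) F) : ℝ) =
      (Fintype.card F : ℝ) ^ ((n : ℝ) ^ 2) := by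
    rw [Matrix.card_eq_pow, Fintype.card_fin, Nat.cast_pow, ← Real.rpow_natCast, ← sq]
    norm_cast
  have hbound := SumProductDigraph.card_mul_norm_sq_le_of_mulVec_eq_smul F hv0 hv (hcard ▸ hlam)
  rw [one_mul]
  exact Real.le_rpow_sub_half_of_mul_sq_le (norm_nonneg lam) (by positivity) (hcard ▸ hbound)

/-- Theorem 4.1 (eigenvalue bound): every eigenvalue λ of the adjacency matrix of
the sum-product digraph with |λ| ≠ q^{n²} satisfies |λ| ≤ c · q^{n² - 1/2}. -/
theorem sum_product_digraph_eigenvalue_bound (n : ℕ) (hn : 1 ≤ n) :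
    ∃ c : ℝ, 0 < c ∧
      ∀ (F : Type) [Field F] [Fintype F] [DecidableEq F],
        Odd (Fintype.card F) →
        ∀ (lam : ℂ)
          (v : Matrix (Fin n) (Fin n) F × Matrix (Fin n) (Fin n) F → ℂ),
          v ≠ 0 →
          (Matrix.of fun p q : Matrix (Fin n) (Fin n) F × Matrix (Fin n) (Fin n) F =>
              if p.1 * q.1 = p.2 + q.2 then (1 : ℂ) else 0).mulVec v = lam • v →
          ‖lam‖ ≠ (Fintype.card F : ℝ) ^ ((n : ℝ) ^ 2) →
          ‖lam‖ ≤ c * (Fintype.card F : ℝ) ^ ((n : ℝ) ^ 2 - 1 / 2) :=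
  sum_product_digraph_eigenvalue_bound_general n
end

section
/- There is a constant c > 0 depending only on n such that the following holds. Let q be an odd prime power, n ≥ 1, and let U, V ⊆ M_n(𝔽_q) × M_n(𝔽_q). Let e(U, V) denote the number of pairs ((A, C), (B, D)) ∈ U × V with A·B = C + D. Then | e(U, V) − |U||V|/q^{n²} | ≤ c · q^{n² − 1/2} · √(|U||V|). -/
open Finset
open scoped Matrix

/-!
View `e(U, V)` as counting the edges `(A, C) → (B, D)`, `A * B = C + D`, of a digraph on
`S × S`, where `S = M_n(𝔽_q)` and `N = |S|`. Every vertex has exactly `N` in-neighbours, so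
Cauchy–Schwarz over the tails bounds the squared discrepancy by `|U|` times the sum over
`v, v' ∈ V` of `codeg(v, v') - 1`. The common in-neighbours of `(B, D)` and `(B', D')` are the
solutions of `A * (B - B') = D - D'`: exactly one when `B - B'` is invertible, and `N` in total
over all `D'` for fixed `B'`. So each `v` contributes at most `N` times the number of singular
matrices, which is at most `N / (q - 1)`: a singular matrix kills at least `q - 1` nonzero
vectors, and a nonzero vector is killed by exactly `N / q ^ n` matrices.
-/

section Mixing
variable {α β : Type*} [Fintype α] (R : α → β → Prop) [DecidableRel R]

theorem sum_boole_sub_mul_boole_sub (d : ℕ) (hd : ∀ b, #{a | R a b} = d) (b b' : β) :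
    ∑ a, ((if R a b then 1 else 0) - (d : ℝ) / Fintype.card α) *
        ((if R a b' then 1 else 0) - (d : ℝ) / Fintype.card α) =
      #{a | R a b ∧ R a b'} - (d : ℝ) ^ 2 / Fintype.card α := by
  set t := (d : ℝ) / Fintype.card α
  have hexpand : ∀ a, ((if R a b then 1 else 0) - t) * ((if R a b' then 1 else 0) - t) =
      (if R a b ∧ R a b' then 1 else 0) - t * (if R a b then 1 else 0)
        - t * (if R a b' then 1 else 0) + t ^ 2 := fun a => by
    by_cases h : R a b <;> by_cases h' : R a b' <;> simp [h, h'] <;> ring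
  have hmass : (Fintype.card α : ℝ) * t ^ 2 = d ^ 2 / Fintype.card α := by
    rcases eq_or_ne (Fintype.card α : ℝ) 0 with h | h
    · simp [t, h]
    · simp only [t]
      field_simp
  simp only [hexpand, sum_add_distrib, sum_sub_distrib, ← mul_sum, sum_boole, hd, sum_const,
    card_univ, nsmul_eq_mul]
  rw [hmass]
  ring

theorem sq_card_filter_sub_le (d : ℕ) (hd : ∀ b, #{a | R a b} = d)
    (U : Finset α) (V : Finset β) :
    ((#{p ∈ U ×ˢ V | R p.1 p.2} : ℝ) - #U * #V * d / Fintype.card α) ^ 2 ≤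
      #U * ∑ b ∈ V, ∑ b' ∈ V, ((#{a | R a b ∧ R a b'} : ℝ) - d ^ 2 / Fintype.card α) := by
  set t := (d : ℝ) / Fintype.card α
  set g : α → ℝ := fun a => ∑ b ∈ V, ((if R a b then 1 else 0) - t)
  have hdiscrepancy : (#{p ∈ U ×ˢ V | R p.1 p.2} : ℝ) - #U * #V * d / Fintype.card α =
      ∑ a ∈ U, g a := by
    simp only [g, sum_sub_distrib, ← sum_boole, sum_product, sum_const, nsmul_eq_mul, t]
    ring
  have hsecond : ∑ a, g a ^ 2 =
      ∑ b ∈ V, ∑ b' ∈ V, ((#{a | R a b ∧ R a b'} : ℝ) - d ^ 2 / Fintype.card α) := by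
    rw [sum_congr rfl fun a _ => by rw [sq, sum_mul_sum], sum_comm]
    refine sum_congr rfl fun b _ => ?_
    rw [sum_comm]
    exact sum_congr rfl fun b' _ => sum_boole_sub_mul_boole_sub R d hd b b'
  calc ((#{p ∈ U ×ˢ V | R p.1 p.2} : ℝ) - #U * #V * d / Fintype.card α) ^ 2
      = (∑ a ∈ U, g a) ^ 2 := by rw [hdiscrepancy]
    _ ≤ #U * ∑ a ∈ U, g a ^ 2 := sq_sum_le_card_mul_sum_sq
    _ ≤ #U * ∑ a, g a ^ 2 := mul_le_mul_of_nonneg_left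
      (sum_le_sum_of_subset_of_nonneg (subset_univ U) fun a _ _ => sq_nonneg (g a)) (by positivity)
    _ = _ := by rw [hsecond]

end Mixing

section SumProduct
variable {S : Type*} [Ring S]

def SumProductAdj (u v : S × S) : Prop := u.1 * v.1 = u.2 + v.2

theorem SumProductAdj.eq_mul_sub {u v : S × S} (h : SumProductAdj u v) :
    u = (u.1, u.1 * v.1 - v.2) := by
  rw [h, add_sub_cancel_right]

theorem sumProductAdj_mul_sub (A : S) (v : S × S) : SumProductAdj (A, A * v.1 - v.2) v :=
  (sub_add_cancel _ _).symm

variable [Fintype S] [DecidableEq S]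

instance : DecidableRel (SumProductAdj (S := S)) := fun _ _ => decEq _ _

theorem card_filter_sumProductAdj (v : S × S) :
    #{u | SumProductAdj u v} = Fintype.card S := by
  rw [← card_univ]
  refine card_nbij' Prod.fst (fun A => (A, A * v.1 - v.2)) (fun _ _ => mem_univ _)
    (fun A _ => by simpa using sumProductAdj_mul_sub A v)
    (fun u hu => (SumProductAdj.eq_mul_sub (mem_filter.1 (mem_coe.1 hu)).2).symm) (fun _ _ => rfl)

theorem card_filter_sumProductAdj_and (v v' : S × S) :
    #{u | SumProductAdj u v ∧ SumProductAdj u v'} = #{A | A * (v.1 - v'.1) = v.2 - v'.2} := by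
  refine card_nbij' Prod.fst (fun A => (A, A * v.1 - v.2)) (fun u hu => ?_)
    (fun A hA => ?_) (fun u hu => ?_) (fun _ _ => rfl)
  · simp only [coe_filter, mem_univ, true_and, Set.mem_ofPred_eq] at hu ⊢
    rw [mul_sub, hu.1, hu.2]; abel
  · simp only [coe_filter, mem_univ, true_and, Set.mem_ofPred_eq] at hA ⊢
    refine ⟨sumProductAdj_mul_sub A v, ?_⟩
    rw [mul_sub, sub_eq_iff_eq_add] at hA
    show A * v'.1 = A * v.1 - v.2 + v'.2
    rw [hA]; abel
  · exact (SumProductAdj.eq_mul_sub (mem_filter.1 (mem_coe.1 hu)).2.1).symm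

theorem card_filter_mul_eq_of_isUnit {K : S} (hK : IsUnit K) (E : S) :
    #{A | A * K = E} = 1 := by
  obtain ⟨u, rfl⟩ := hK
  rw [card_eq_one]
  exact ⟨E * ↑u⁻¹, by ext A; simp [Units.eq_mul_inv_iff_mul_eq]⟩

theorem sum_card_filter_mul_eq (K : S) :
    ∑ E, #{A | A * K = E} = Fintype.card S :=
  (card_eq_sum_card_fiberwise fun A _ => mem_univ (A * K)).symm

theorem sum_card_filter_sumProductAdj_and_sub_one_le (v : S × S) (V : Finset (S × S)) :
    ∑ v' ∈ V, ((#{u | SumProductAdj u v ∧ SumProductAdj u v'} : ℝ) - 1) ≤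
      #{K : S | ¬IsUnit K} * Fintype.card S := by
  set h : S × S → ℝ := fun w => if IsUnit w.1 then 0 else #{A | A * w.1 = w.2}
  calc ∑ v' ∈ V, ((#{u | SumProductAdj u v ∧ SumProductAdj u v'} : ℝ) - 1)
      ≤ ∑ v' ∈ V, h (v - v') := sum_le_sum fun v' _ => by
        rw [card_filter_sumProductAdj_and]
        by_cases hK : IsUnit (v.1 - v'.1)
        · simp [h, hK, card_filter_mul_eq_of_isUnit hK]
        · simp [h, hK]
    _ ≤ ∑ v', h (v - v') :=
        sum_le_sum_of_subset_of_nonneg (subset_univ V) fun w _ _ => by positivity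
    _ = ∑ w, h w := Fintype.sum_equiv (Equiv.subLeft v) _ _ fun _ => rfl
    _ = ∑ K : S, if IsUnit K then 0 else (Fintype.card S : ℝ) := by
        rw [Fintype.sum_prod_type]
        refine sum_congr rfl fun K _ => ?_
        split_ifs with hK
        · simp [h, hK]
        · simp [h, hK, ← Nat.cast_sum, sum_card_filter_mul_eq]
    _ = #{K : S | ¬IsUnit K} * Fintype.card S := by
        rw [sum_ite, sum_const_zero, zero_add, sum_const, nsmul_eq_mul]

theorem sq_card_filter_sumProductAdj_sub_le (U V : Finset (S × S)) :
    ((#{p ∈ U ×ˢ V | SumProductAdj p.1 p.2} : ℝ) - #U * #V / Fintype.card S) ^ 2 ≤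
      #U * #V * (#{K : S | ¬IsUnit K} * Fintype.card S) := by
  have hS : (Fintype.card S : ℝ) ≠ 0 := by positivity
  have hmix := sq_card_filter_sub_le SumProductAdj _ card_filter_sumProductAdj U V
  simp only [Fintype.card_prod, Nat.cast_mul] at hmix
  rw [show (#U * #V * Fintype.card S / (Fintype.card S * Fintype.card S) : ℝ) =
      #U * #V / Fintype.card S by field_simp,
    show ((Fintype.card S : ℝ) ^ 2 / (Fintype.card S * Fintype.card S)) = 1 by field_simp] at hmix
  refine hmix.trans ?_
  rw [mul_assoc]
  gcongr
  calc ∑ b ∈ V, ∑ b' ∈ V, ((#{u | SumProductAdj u b ∧ SumProductAdj u b'} : ℝ) - 1)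
      ≤ ∑ _b ∈ V, (#{K : S | ¬IsUnit K} * Fintype.card S : ℝ) :=
        sum_le_sum fun b _ => sum_card_filter_sumProductAdj_and_sub_one_le b V
    _ = _ := by rw [sum_const, nsmul_eq_mul]

end SumProduct

namespace Matrix
variable {m n F : Type*} [Fintype n] [DecidableEq n] [Field F]

theorem mulVec_left_surjective {x : n → F} (hx : x ≠ 0) :
    Function.Surjective fun M : Matrix m n F => M *ᵥ x := by
  obtain ⟨j, hj⟩ := Function.ne_iff.1 hx
  intro y
  refine ⟨vecMulVec y (Pi.single j (x j)⁻¹), ?_⟩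
  simp [vecMulVec_mulVec, inv_mul_cancel₀ hj]

variable [Fintype m] [DecidableEq m] [Fintype F] [DecidableEq F]

theorem card_filter_mulVec_eq_zero_mul {x : n → F} (hx : x ≠ 0) :
    #{M : Matrix m n F | M *ᵥ x = 0} * Fintype.card F ^ Fintype.card m =
      Fintype.card (Matrix m n F) := by
  set f := mulVec.addMonoidHomLeft (m := m) x
  have hker : #{M : Matrix m n F | M *ᵥ x = 0} = Nat.card f.ker := by
    rw [← Fintype.card_subtype, ← Nat.card_eq_fintype_card]
    exact Nat.card_congr (Equiv.subtypeEquivRight fun M => by rfl)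
  have hrange : f.range = ⊤ := AddMonoidHom.range_eq_top.2 (mulVec_left_surjective hx)
  rw [hker, ← Fintype.card_fun, ← Nat.card_eq_fintype_card, ← Nat.card_eq_fintype_card,
    ← AddSubgroup.card_top (G := m → F), ← hrange, ← AddSubgroup.index_ker,
    AddSubgroup.card_mul_index]

theorem sub_one_le_card_filter_mulVec_eq_zero {M : Matrix m m F} (hM : ¬IsUnit M) :
    Fintype.card F - 1 ≤ #{x | x ≠ 0 ∧ M *ᵥ x = 0} := by
  obtain ⟨v, hv, hMv⟩ := exists_mulVec_eq_zero_iff.2 <| by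
    rwa [isUnit_iff_isUnit_det, isUnit_iff_ne_zero, not_not] at hM
  calc Fintype.card F - 1 = #{c : F | c ≠ 0} := by
        rw [filter_ne', card_erase_of_mem (mem_univ 0), card_univ]
    _ ≤ #{x | x ≠ 0 ∧ M *ᵥ x = 0} :=
        card_le_card_of_injOn (· • v)
          (fun c hc => by simp_all [mulVec_smul])
          (smul_left_injective F hv).injOn

theorem card_filter_not_isUnit_mul_le :
    #{M : Matrix m m F | ¬IsUnit M} * (Fintype.card F - 1) ≤ Fintype.card (Matrix m m F) := by
  set k := Fintype.card (Matrix m m F) / Fintype.card F ^ Fintype.card m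
  have hcount := card_nsmul_le_card_nsmul (fun M x => M *ᵥ x = 0)
    (s := {M : Matrix m m F | ¬IsUnit M}) (t := {x : m → F | x ≠ 0}) (m := Fintype.card F - 1)
    (n := k) (fun M hM => by
      simpa [bipartiteAbove, filter_filter] using
        sub_one_le_card_filter_mulVec_eq_zero (mem_filter.1 hM).2)
    (fun x hx => (card_le_card (monotone_filter_left _ (filter_subset _ _))).trans_eq <|
      Nat.eq_div_of_mul_eq_left (by positivity)
        (card_filter_mulVec_eq_zero_mul (mem_filter.1 hx).2))
  calc #{M : Matrix m m F | ¬IsUnit M} * (Fintype.card F - 1)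
      ≤ #{x : m → F | x ≠ 0} * k := hcount
    _ ≤ Fintype.card (m → F) * k := Nat.mul_le_mul_right _ (card_le_univ _)
    _ ≤ Fintype.card (Matrix m m F) := by
      rw [Fintype.card_fun]; exact Nat.mul_div_le _ _

theorem sq_card_filter_sumProductAdj_sub_le_two_mul
    (U V : Finset (Matrix m m F × Matrix m m F)) :
    ((#{p ∈ U ×ˢ V | SumProductAdj p.1 p.2} : ℝ) - #U * #V / Fintype.card (Matrix m m F)) ^ 2 ≤
      2 * (Fintype.card (Matrix m m F) ^ 2 / Fintype.card F) * (#U * #V) := by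
  set N : ℝ := (Fintype.card (Matrix m m F) : ℝ)
  have hq : (2 : ℝ) ≤ Fintype.card F := by exact_mod_cast Fintype.one_lt_card
  have hsingular : (#{M : Matrix m m F | ¬IsUnit M} : ℝ) * (Fintype.card F - 1) ≤ N := by
    have := Nat.cast_le (α := ℝ).2 (card_filter_not_isUnit_mul_le (m := m) (F := F))
    rwa [Nat.cast_mul, Nat.cast_sub Fintype.card_pos, Nat.cast_one] at this
  have hsN : (#{M : Matrix m m F | ¬IsUnit M} : ℝ) * N ≤ 2 * (N ^ 2 / Fintype.card F) := by
    rw [mul_div_assoc', le_div_iff₀ (by positivity)]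
    -- `q ≤ 2 * (q - 1)` because `2 ≤ q`
    nlinarith [mul_le_mul_of_nonneg_right hsingular (by positivity : (0 : ℝ) ≤ N)]
  refine (sq_card_filter_sumProductAdj_sub_le U V).trans ?_
  rw [mul_comm _ (_ * _ : ℝ)]
  gcongr

end Matrix

theorem sum_product_digraph_mixing_general (n : ℕ) :
    ∃ c : ℝ, 0 < c ∧
      ∀ (F : Type) [Field F] [Fintype F],
        Odd (Fintype.card F) →
        ∀ U V : Set (Matrix (Fin n) (Fin n) F × Matrix (Fin n) (Fin n) F),
          |({p : (Matrix (Fin n) (Fin n) F × Matrix (Fin n) (Fin n) F) ×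
                (Matrix (Fin n) (Fin n) F × Matrix (Fin n) (Fin n) F) |
                p.1 ∈ U ∧ p.2 ∈ V ∧ p.1.1 * p.2.1 = p.1.2 + p.2.2}.ncard : ℝ) -
              (U.ncard : ℝ) * (V.ncard : ℝ) / (Fintype.card F : ℝ) ^ ((n : ℝ) ^ 2)| ≤
            c * (Fintype.card F : ℝ) ^ ((n : ℝ) ^ 2 - 1 / 2) *
              Real.sqrt ((U.ncard : ℝ) * (V.ncard : ℝ)) := by
  classical
  refine ⟨√2, by positivity, fun F _ _ _ U V => ?_⟩
  have hq : (0 : ℝ) < Fintype.card F := by positivity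
  have hN : (Fintype.card F : ℝ) ^ ((n : ℝ) ^ 2) = Fintype.card (Matrix (Fin n) (Fin n) F) := by
    rw [← Nat.cast_ofNat, ← Nat.cast_pow, Real.rpow_natCast, Fintype.card_eq_nat_card,
      Fintype.card_eq_nat_card]
    simp [Matrix, sq, pow_mul]
  have hedges : {p : (Matrix (Fin n) (Fin n) F × Matrix (Fin n) (Fin n) F) ×
      (Matrix (Fin n) (Fin n) F × Matrix (Fin n) (Fin n) F) |
      p.1 ∈ U ∧ p.2 ∈ V ∧ p.1.1 * p.2.1 = p.1.2 + p.2.2}.ncard =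
      #{p ∈ U.toFinset ×ˢ V.toFinset | SumProductAdj p.1 p.2} := by
    rw [← Set.ncard_coe_finset, coe_filter]
    simp only [mem_product, Set.mem_toFinset, and_assoc]
    rfl
  rw [hedges, Set.ncard_eq_toFinset_card', Set.ncard_eq_toFinset_card', hN]
  refine (Real.abs_le_sqrt (Matrix.sq_card_filter_sumProductAdj_sub_le_two_mul _ _)).trans_eq ?_
  rw [Real.rpow_sub hq, hN, ← Real.sqrt_eq_rpow, Real.sqrt_mul (by positivity),
    Real.sqrt_mul (by positivity), Real.sqrt_div' _ hq.le, Real.sqrt_sq (by positivity)]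

/-- Expander mixing lemma for the sum-product digraph over M_n(F_q). -/
theorem sum_product_digraph_mixing (n : ℕ) (hn : 1 ≤ n) :
    ∃ c : ℝ, 0 < c ∧
      ∀ (F : Type) [Field F] [Fintype F],
        Odd (Fintype.card F) →
        ∀ U V : Set (Matrix (Fin n) (Fin n) F × Matrix (Fin n) (Fin n) F),
          |({p : (Matrix (Fin n) (Fin n) F × Matrix (Fin n) (Fin n) F) ×
                (Matrix (Fin n) (Fin n) F × Matrix (Fin n) (Fin n) F) |
                p.1 ∈ U ∧ p.2 ∈ V ∧ p.1.1 * p.2.1 = p.1.2 + p.2.2}.ncard : ℝ) -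
              (U.ncard : ℝ) * (V.ncard : ℝ) / (Fintype.card F : ℝ) ^ ((n : ℝ) ^ 2)| ≤
            c * (Fintype.card F : ℝ) ^ ((n : ℝ) ^ 2 - 1 / 2) *
              Real.sqrt ((U.ncard : ℝ) * (V.ncard : ℝ)) :=
  sum_product_digraph_mixing_general n
end
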